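/- arXiv:math/0412310 — 4 statements merged into one kernel-verified Lean document; each statement's English description precedes it below -/
import Mathlib

section
/- Let (V,𝔯) be a LEARS. Then: (i) for all α, β ∈ 𝔯, −4 ≤ 2(β,α)/(α,α) ≤ 4; (ii) letting V⁰ be the radical of the form, V̄ = V/V⁰ with the induced positive definite form, and 𝔯̄ the image of 𝔯 in V̄, the set 𝔯̄ ∩ W̄ is finite for every finite-dimensional subspace W̄ of V̄, each reflection σ_ᾱ (ᾱ ∈ 𝔯̄) maps 𝔯̄ onto 𝔯̄, and 𝔯̄ is irreducible; that is, (V̄,𝔯̄) is a locally finite irreducible root system. -/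
private lemma psd_radical {V : Type*} [AddCommGroup V] [Module ℝ V]
    (form : LinearMap.BilinForm ℝ V)
    (hsym : ∀ v w : V, form v w = form w v)
    (hpsd : ∀ v : V, 0 ≤ form v v)
    {v : V} (hv : form v v = 0) : ∀ x : V, form v x = 0 := by
  intro x
  rcases (hpsd x).lt_or_eq with hC | hC
  · have h := hpsd ((form x x) • v - (form v x) • x)
    simp only [map_sub, map_smul, LinearMap.sub_apply, LinearMap.smul_apply, smul_eq_mul] at h
    rw [hsym x v, hv] at h
    have hsq : (form v x)^2 ≤ 0 := by nlinarith [h, hC]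
    have : (form v x)^2 = 0 := le_antisymm hsq (sq_nonneg _)
    exact pow_eq_zero_iff (two_ne_zero) |>.mp this
  · have h := hpsd (v - (form v x) • x)
    simp only [map_sub, map_smul, LinearMap.sub_apply, LinearMap.smul_apply, smul_eq_mul] at h
    rw [hsym x v] at h
    have hsq : (form v x)^2 ≤ 0 := by nlinarith [h, hv, hC.symm]
    have : (form v x)^2 = 0 := le_antisymm hsq (sq_nonneg _)
    exact pow_eq_zero_iff (two_ne_zero) |>.mp this

private lemma psd_cs {V : Type*} [AddCommGroup V] [Module ℝ V]
    (form : LinearMap.BilinForm ℝ V)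
    (hsym : ∀ v w : V, form v w = form w v)
    (hpsd : ∀ v : V, 0 ≤ form v v)
    (v w : V) (hw : 0 < form w w) : (form v w)^2 ≤ form v v * form w w := by
  have h := hpsd ((form w w) • v - (form v w) • w)
  simp only [map_sub, map_smul, LinearMap.sub_apply, LinearMap.smul_apply, smul_eq_mul] at h
  rw [hsym w v] at h
  nlinarith [h, hw]

theorem proposition_4_2
    {V : Type*} [AddCommGroup V] [Module ℝ V]
    (form : LinearMap.BilinForm ℝ V)
    (hsym : ∀ v w : V, form v w = form w v)
    (hpsd : ∀ v : V, 0 ≤ form v v)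
    (hnonzero : form ≠ 0)
    (Rts : Set V)
    -- (1) all roots are anisotropic and Rts spans V
    (h1a : ∀ α ∈ Rts, form α α ≠ 0)
    (h1b : Submodule.span ℝ Rts = ⊤)
    -- (2) integrality
    (h2 : ∀ α ∈ Rts, ∀ β ∈ Rts, ∃ n : ℤ, 2 * form α β = (n : ℝ) * form α α)
    -- (3) invariance under reflections
    (h3 : ∀ α ∈ Rts, ∀ β ∈ Rts, β - (2 * form α β / form α α) • α ∈ Rts)
    -- (4) irreducibility
    (h4 : ∀ R1 R2 : Set V, Rts = R1 ∪ R2 →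
      (∀ x ∈ R1, ∀ y ∈ R2, form x y = 0) → R1 = ∅ ∨ R2 = ∅) :
    -- (i)
    (∀ α ∈ Rts, ∀ β ∈ Rts,
      -4 ≤ 2 * form β α / form α α ∧ 2 * form β α / form α α ≤ 4) ∧
    -- (ii) (V̄, 𝔯̄) is a locally finite irreducible root system
    (∀ V0 : Submodule ℝ V, (∀ v : V, v ∈ V0 ↔ ∀ w : V, form v w = 0) →
      ∀ Rbar : Set (V ⧸ V0), Rbar = V0.mkQ '' Rts →
        ((∀ W : Submodule ℝ (V ⧸ V0), FiniteDimensional ℝ ↥W →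
            (Rbar ∩ (W : Set (V ⧸ V0))).Finite) ∧
        (∀ α ∈ Rts,
          V0.mkQ '' ((fun β => β - (2 * form α β / form α α) • α) '' Rts) = Rbar) ∧
        (∀ S1 S2 : Set (V ⧸ V0), Rbar = S1 ∪ S2 →
          (∀ x ∈ Rts, ∀ y ∈ Rts, V0.mkQ x ∈ S1 → V0.mkQ y ∈ S2 → form x y = 0) →
          S1 = ∅ ∨ S2 = ∅))) := by

  have part_i : ∀ α ∈ Rts, ∀ β ∈ Rts,
      -4 ≤ 2 * form β α / form α α ∧ 2 * form β α / form α α ≤ 4 := by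
    intro α hα β hβ
    obtain ⟨n, hn⟩ := h2 α hα β hβ
    obtain ⟨m, hm⟩ := h2 β hβ α hα
    have hQα : 0 < form α α := (hpsd α).lt_of_ne (Ne.symm (h1a α hα))
    have hQβ : 0 < form β β := (hpsd β).lt_of_ne (Ne.symm (h1a β hβ))
    have hval : 2 * form β α / form α α = (n : ℝ) := by
      rw [hsym β α, hn, mul_div_assoc, div_self hQα.ne', mul_one]
    rw [hval]
    have hbound : -4 ≤ (n:ℝ) ∧ (n:ℝ) ≤ 4 := by
      by_cases hz : form α β = 0
      · have h0 : (n:ℝ) = 0 := by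
          have h0' : (n:ℝ) * form α α = 0 := by rw [← hn, hz]; ring
          exact (mul_eq_zero.mp h0').resolve_right hQα.ne'
        rw [h0]; norm_num
      · have hcs : (form α β)^2 ≤ form α α * form β β := psd_cs form hsym hpsd α β hQβ
        have hm' : 2 * form α β = (m:ℝ) * form β β := by rw [hsym α β, hm]
        have key : ((n:ℝ) * m) * (form α α * form β β) = 4 * (form α β)^2 := by
          calc ((n:ℝ) * m) * (form α α * form β β)
              = ((n:ℝ) * form α α) * ((m:ℝ) * form β β) := by ring
            _ = (2 * form α β) * (2 * form α β) := by rw [← hn, ← hm']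
            _ = 4 * (form α β)^2 := by ring
        have hnm4 : (n:ℝ) * m ≤ 4 := by
          have h4 : ((n:ℝ) * m) * (form α α * form β β) ≤ 4 * (form α α * form β β) := by
            nlinarith [key, hcs]
          have hp := mul_pos hQα hQβ
          exact le_of_mul_le_mul_right (by linarith) hp
        have hpos : 0 < 4 * (form α β)^2 := by positivity
        have hnmpos : (0:ℝ) < (n:ℝ) * m := by
          by_contra hcon
          push_neg at hcon
          nlinarith [key, hpos, mul_nonneg (neg_nonneg.mpr hcon) (mul_pos hQα hQβ).le]
        have hZ0 : (0:ℤ) < n * m := by exact_mod_cast (by push_cast; exact hnmpos : (0:ℝ) < ((n * m : ℤ) : ℝ))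
        have hZ4 : n * m ≤ 4 := by exact_mod_cast (by push_cast; exact hnm4 : ((n * m : ℤ) : ℝ) ≤ 4)
        have hmne : m ≠ 0 := by rintro rfl; simp at hZ0
        have habs : |n| ≤ 4 := by
          calc |n| = |n| * 1 := (mul_one _).symm
            _ ≤ |n| * |m| := mul_le_mul_of_nonneg_left (Int.one_le_abs (by exact hmne)) (abs_nonneg n)
            _ = |n * m| := (abs_mul n m).symm
            _ = n * m := abs_of_pos hZ0
            _ ≤ 4 := hZ4
        have hb := abs_le.mp habs
        constructor
        · exact_mod_cast hb.1
        · exact_mod_cast hb.2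
    exact hbound
  refine ⟨part_i, ?_⟩
  intro V0 hV0 Rbar hRbar
  refine ⟨?_, ?_, ?_⟩
  ·
    intro W hW
    have hex : ∀ s ∈ Rbar, ∃ v, v ∈ Rts ∧ V0.mkQ v = s := by
      intro s hs; rw [hRbar] at hs; exact hs
    choose! ℓ hℓ1 hℓ2 using hex
    choose! N hN using h2
    set S : Set (V ⧸ V0) := Rbar ∩ ↑W with hS
    obtain ⟨t, htS, htspan, htind⟩ := exists_linearIndependent ℝ S
    have hspanle : Submodule.span ℝ S ≤ W := Submodule.span_le.mpr Set.inter_subset_right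
    haveI : FiniteDimensional ℝ (Submodule.span ℝ S) := Submodule.finiteDimensional_of_le hspanle
    have htsub : t ⊆ ↑(Submodule.span ℝ S) := htS.trans Submodule.subset_span
    have htind' : LinearIndependent ℝ
        (fun x : t => (⟨(x : V ⧸ V0), htsub x.2⟩ : Submodule.span ℝ S)) :=
      LinearIndependent.of_comp (Submodule.span ℝ S).subtype htind
    haveI : Finite t := htind'.finite
    -- roots membership
    have hmem : ∀ s ∈ S, ℓ s ∈ Rts := fun s hs => hℓ1 s hs.1
    have hmemt : ∀ i ∈ t, ℓ i ∈ Rts := fun i hi => hℓ1 i (htS hi).1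
    -- bounds
    have hbound : ∀ s ∈ S, ∀ i ∈ t, -4 ≤ N (ℓ i) (ℓ s) ∧ N (ℓ i) (ℓ s) ≤ 4 := by
      intro s hs i hi
      have hiR := hmemt i hi
      have hsR := hmem s hs
      have hQ : form (ℓ i) (ℓ i) ≠ 0 := h1a _ hiR
      have hNi := hN (ℓ i) hiR (ℓ s) hsR
      have hval : 2 * form (ℓ s) (ℓ i) / form (ℓ i) (ℓ i) = (N (ℓ i) (ℓ s) : ℝ) := by
        rw [hsym (ℓ s) (ℓ i), hNi, mul_div_assoc, div_self hQ, mul_one]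
      have hb := part_i (ℓ i) hiR (ℓ s) hsR
      rw [hval] at hb
      exact ⟨by exact_mod_cast hb.1, by exact_mod_cast hb.2⟩
    -- injectivity
    have hinj : Set.InjOn (fun s => fun i : t => N (ℓ (i : V ⧸ V0)) (ℓ s)) S := by
      intro s hs s' hs' hFF
      have horto : ∀ i ∈ t, form (ℓ i) (ℓ s - ℓ s') = 0 := by
        intro i hi
        have hiR := hmemt i hi
        have e1 := hN (ℓ i) hiR (ℓ s) (hmem s hs)
        have e2 := hN (ℓ i) hiR (ℓ s') (hmem s' hs')
        have heq : N (ℓ i) (ℓ s) = N (ℓ i) (ℓ s') := congrFun hFF ⟨i, hi⟩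
        rw [map_sub]
        rw [heq] at e1
        have : form (ℓ i) (ℓ s) = form (ℓ i) (ℓ s') := by linarith
        simp [LinearMap.sub_apply, this]
      have hdiff : s - s' ∈ Submodule.map V0.mkQ (Submodule.span ℝ (ℓ '' t)) := by
        have h1 : s - s' ∈ Submodule.span ℝ S :=
          sub_mem (Submodule.subset_span hs) (Submodule.subset_span hs')
        rw [← htspan] at h1
        refine Submodule.span_le.mpr ?_ h1
        intro i hi
        exact ⟨ℓ i, Submodule.subset_span (Set.mem_image_of_mem _ hi), hℓ2 i (htS hi).1⟩
      obtain ⟨u, hu, huq⟩ := hdiff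
      have hd : V0.mkQ (ℓ s - ℓ s') = s - s' := by
        rw [map_sub, hℓ2 s hs.1, hℓ2 s' hs'.1]
      have hker : ℓ s - ℓ s' - u ∈ V0 := by
        have h0 : V0.mkQ (ℓ s - ℓ s' - u) = 0 := by rw [map_sub, hd, huq, sub_self]
        exact (Submodule.Quotient.mk_eq_zero V0).mp h0
      have hrad : ∀ w, form (ℓ s - ℓ s' - u) w = 0 := (hV0 _).mp hker
      have hup : ∀ x ∈ Submodule.span ℝ (ℓ '' t), form x (ℓ s - ℓ s') = 0 := by
        intro x hx
        induction hx using Submodule.span_induction with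
        | mem x hx => obtain ⟨i, hi, rfl⟩ := hx; exact horto i hi
        | zero => simp
        | add x y _ _ hx hy => simp [LinearMap.add_apply, hx, hy]
        | smul c x _ hx => simp [LinearMap.smul_apply, hx]
      have huu : form u u = 0 := by
        have h1 := hrad u
        have h2 := hup u hu
        rw [map_sub, LinearMap.sub_apply, hsym (ℓ s - ℓ s') u] at h1
        linarith
      have hurad := psd_radical form hsym hpsd huu
      have hdrad : ∀ w, form (ℓ s - ℓ s') w = 0 := by
        intro w
        have h1 := hrad w
        have h2 := hurad w
        rw [map_sub, LinearMap.sub_apply] at h1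
        linarith
      have hmemV0 : ℓ s - ℓ s' ∈ V0 := (hV0 _).mpr hdrad
      have hz : s - s' = 0 := by
        rw [← hd]
        exact (Submodule.Quotient.mk_eq_zero V0).mpr hmemV0
      exact sub_eq_zero.mp hz
    -- conclude
    have himfin : ((fun s => fun i : t => N (ℓ (i : V ⧸ V0)) (ℓ s)) '' S).Finite := by
      apply Set.Finite.subset (Set.Finite.pi (fun _ : t => Set.finite_Icc (-4 : ℤ) 4))
      rintro g ⟨s, hs, rfl⟩
      intro i _
      exact Set.mem_Icc.mpr ⟨(hbound s hs i i.2).1, (hbound s hs i i.2).2⟩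
    exact Set.Finite.of_finite_image himfin hinj
  ·
    intro α hα
    rw [hRbar]
    apply Set.Subset.antisymm
    · apply Set.image_mono
      rintro y ⟨β, hβ, rfl⟩
      exact h3 α hα β hβ
    · rintro x ⟨β, hβ, rfl⟩
      refine ⟨(fun β => β - (2 * form α β / form α α) • α) (β - (2 * form α β / form α α) • α),
        Set.mem_image_of_mem _ (h3 α hα β hβ), ?_⟩
      congr 1
      have hQ : form α α ≠ 0 := h1a α hα
      simp only [map_sub, map_smul, LinearMap.sub_apply, LinearMap.smul_apply, smul_eq_mul]
      have hc : 2 * (form α β - 2 * form α β / form α α * form α α) / form α α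
          = -(2 * form α β / form α α) := by
        field_simp
        ring
      rw [hc]
      module
  ·
    intro S1 S2 hunion horth
    set R1 : Set V := {x | x ∈ Rts ∧ V0.mkQ x ∈ S1} with hR1
    set R2 : Set V := {x | x ∈ Rts ∧ V0.mkQ x ∈ S2} with hR2
    have hcover : Rts = R1 ∪ R2 := by
      apply Set.Subset.antisymm
      · intro x hx
        have : V0.mkQ x ∈ S1 ∪ S2 := by
          rw [← hunion, hRbar]; exact Set.mem_image_of_mem _ hx
        rcases this with h | h
        · exact Or.inl ⟨hx, h⟩
        · exact Or.inr ⟨hx, h⟩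
      · rintro x (⟨hx, -⟩ | ⟨hx, -⟩) <;> exact hx
    rcases h4 R1 R2 hcover (fun x hx y hy => horth x hx.1 y hy.1 hx.2 hy.2) with h | h
    · left
      ext s
      simp only [Set.mem_empty_iff_false, iff_false]
      intro hs
      have : s ∈ Rbar := hunion ▸ Or.inl hs
      rw [hRbar] at this
      obtain ⟨x, hx, rfl⟩ := this
      have : x ∈ R1 := ⟨hx, hs⟩
      rw [h] at this
      exact this
    · right
      ext s
      simp only [Set.mem_empty_iff_false, iff_false]
      intro hs
      have : s ∈ Rbar := hunion ▸ Or.inr hs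
      rw [hRbar] at this
      obtain ⟨x, hx, rfl⟩ := this
      have : x ∈ R2 := ⟨hx, hs⟩
      rw [h] at this
      exact this
end

section
/- Let (L,H,B) be a LEALA of nullity 0 (i.e. V⁰ = 0) and let Z be the centre of L. Then Z ⊆ H, Z ∩ L_c = 0, and there exists a subspace D of H such that L = L_c ⊕ D ⊕ Z (direct sum of vector spaces), H = (H ∩ L_c) ⊕ D ⊕ Z, D is an abelian subalgebra acting on L_c, and the subalgebra L_c ⊕ D has trivial centre. -/
set_option linter.unusedSectionVars false
set_option maxHeartbeats 1000000

namespace LEALA84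

variable {F L : Type*} [Field F] [CharZero F] [LieRing L] [LieAlgebra F L]
variable {H : LieSubalgebra F L} {Lrt : Module.Dual F ↥H → Submodule F L}
variable {B : LinearMap.BilinForm F L} {R : Set (Module.Dual F ↥H)}
variable {t : Module.Dual F ↥H → ↥H} {form : LinearMap.BilinForm F (Module.Dual F ↥H)}
variable {Lc : LieSubalgebra F L}

lemma brkt_mem (hLrt : ∀ ξ (x : L), x ∈ Lrt ξ ↔ ∀ h : ↥H, ⁅(h : L), x⁆ = ξ h • x)
    {ξ η : Module.Dual F ↥H} {x y : L} (hx : x ∈ Lrt ξ) (hy : y ∈ Lrt η) :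
    ⁅x, y⁆ ∈ Lrt (ξ + η) := by
  rw [hLrt] at *
  intro h
  rw [leibniz_lie, hx h, hy h, smul_lie, lie_smul, LinearMap.add_apply, add_smul]

lemma pow_ad_mem (hLrt : ∀ ξ (x : L), x ∈ Lrt ξ ↔ ∀ h : ↥H, ⁅(h : L), x⁆ = ξ h • x)
    {η ξ : Module.Dual F ↥H} {y : L} (hy : y ∈ Lrt η) :
    ∀ (j : ℕ) {z : L}, z ∈ Lrt ξ → ((LieAlgebra.ad F L y) ^ j) z ∈ Lrt (ξ + (j : F) • η) := by
  intro j
  induction j with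
  | zero => intro z hz; simpa using hz
  | succ n ih =>
    intro z hz
    have h1 : ((LieAlgebra.ad F L y) ^ (n+1)) z = ⁅y, ((LieAlgebra.ad F L y) ^ n) z⁆ := by
      rw [pow_succ', Module.End.mul_apply]; rfl
    rw [h1]
    have h2 := brkt_mem hLrt hy (ih hz)
    have h3 : η + (ξ + (n : F) • η) = ξ + ((n+1 : ℕ) : F) • η := by
      push_cast
      module
    rwa [h3] at h2

lemma orth (hLrt : ∀ ξ (x : L), x ∈ Lrt ξ ↔ ∀ h : ↥H, ⁅(h : L), x⁆ = ξ h • x)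
    (hBinv : ∀ x y z : L, B ⁅x, y⁆ z = B x ⁅y, z⁆)
    {ξ η : Module.Dual F ↥H} {x y : L} (hx : x ∈ Lrt ξ) (hy : y ∈ Lrt η)
    (hne : ξ + η ≠ 0) : B x y = 0 := by
  have key : ∀ h : ↥H, (ξ h + η h) * B x y = 0 := by
    intro h
    have h1 : B ⁅(h:L), x⁆ y = ξ h * B x y := by
      rw [(hLrt ξ x).1 hx h, map_smul, LinearMap.smul_apply, smul_eq_mul]
    have h2 : B x ⁅(h:L), y⁆ = η h * B x y := by
      rw [(hLrt η y).1 hy h, map_smul, smul_eq_mul]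
    have h3 : B ⁅(h:L), x⁆ y = - B x ⁅(h:L), y⁆ := by
      rw [← hBinv x (h:L) y, ← lie_skew, map_neg, LinearMap.neg_apply]
    rw [h1, h2] at h3
    linear_combination h3
  by_contra hB
  apply hne
  ext h
  have := key h
  have h4 : ξ h + η h = 0 := by
    rcases mul_eq_zero.1 this with h' | h'
    · exact h'
    · exact absurd h' hB
  simpa using h4

lemma eq_zero_of_orth_all (hdecomp : ⨆ ξ, Lrt ξ = ⊤)
    (hA2 : B.Nondegenerate)
    {x : L} (hz : ∀ η, ∀ y ∈ Lrt η, B x y = 0) : x = 0 := by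
  apply hA2.1 x
  intro y
  have hy : y ∈ (⊤ : Submodule F L) := trivial
  rw [← hdecomp] at hy
  have hker : (⨆ ξ, Lrt ξ) ≤ LinearMap.ker (B x) := by
    apply iSup_le
    intro ξ z hz'
    exact hz ξ z hz'
  exact hker hy

lemma neg_root (hLrt : ∀ ξ (x : L), x ∈ Lrt ξ ↔ ∀ h : ↥H, ⁅(h : L), x⁆ = ξ h • x)
    (hBinv : ∀ x y z : L, B ⁅x, y⁆ z = B x ⁅y, z⁆)
    (hdecomp : ⨆ ξ, Lrt ξ = ⊤)
    (hR : R = {ξ | Lrt ξ ≠ ⊥})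
    (hA2 : B.Nondegenerate)
    {ξ : Module.Dual F ↥H} (hξ : ξ ∈ R) : -ξ ∈ R := by
  rw [hR] at hξ ⊢
  obtain ⟨x, hx, hxne⟩ := (Submodule.ne_bot_iff _).1 hξ
  intro hbot
  apply hxne
  apply eq_zero_of_orth_all hdecomp hA2
  intro η y hy
  by_cases hcase : η = -ξ
  · subst hcase
    rw [hbot] at hy
    have hy0 : y = 0 := by simpa using hy
    simp [hy0]
  · exact orth hLrt hBinv hx hy (by
      intro hc
      apply hcase
      have : η = -ξ := by
        have := congrArg (fun v => v - ξ) hc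
        simpa [add_sub_cancel_left, eq_comm] using by linear_combination (norm := abel) hc
      exact this)

lemma H_nondeg (hLrt : ∀ ξ (x : L), x ∈ Lrt ξ ↔ ∀ h : ↥H, ⁅(h : L), x⁆ = ξ h • x)
    (hBinv : ∀ x y z : L, B ⁅x, y⁆ z = B x ⁅y, z⁆)
    (hdecomp : ⨆ ξ, Lrt ξ = ⊤)
    (hA1 : Lrt 0 = H.toSubmodule)
    (hA2 : B.Nondegenerate)
    {u : L} (hu : u ∈ H.toSubmodule) (h0 : ∀ h ∈ H.toSubmodule, B u h = 0) :
    u = 0 := by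
  apply eq_zero_of_orth_all hdecomp hA2
  intro η y hy
  by_cases hcase : η = 0
  · subst hcase
    rw [hA1] at hy
    exact h0 y hy
  · have hu0 : u ∈ Lrt 0 := by rw [hA1]; exact hu
    exact orth hLrt hBinv hu0 hy (by simpa using hcase)

lemma pairing (hLrt : ∀ ξ (x : L), x ∈ Lrt ξ ↔ ∀ h : ↥H, ⁅(h : L), x⁆ = ξ h • x)
    (hBinv : ∀ x y z : L, B ⁅x, y⁆ z = B x ⁅y, z⁆)
    (hdecomp : ⨆ ξ, Lrt ξ = ⊤)
    (hR : R = {ξ | Lrt ξ ≠ ⊥})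
    (hA2 : B.Nondegenerate)
    {ξ : Module.Dual F ↥H} {x : L} (hx : x ∈ Lrt ξ) (hxne : x ≠ 0) :
    ∃ y ∈ Lrt (-ξ), B x y ≠ 0 := by
  by_contra hcon
  push_neg at hcon
  apply hxne
  apply eq_zero_of_orth_all hdecomp hA2
  intro η y hy
  by_cases hcase : η = -ξ
  · subst hcase; exact hcon y hy
  · exact orth hLrt hBinv hx hy (by
      intro hc
      exact hcase (by linear_combination (norm := abel) hc))

lemma t_comb (hLrt : ∀ ξ (x : L), x ∈ Lrt ξ ↔ ∀ h : ↥H, ⁅(h : L), x⁆ = ξ h • x)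
    (hBinv : ∀ x y z : L, B ⁅x, y⁆ z = B x ⁅y, z⁆)
    (hdecomp : ⨆ ξ, Lrt ξ = ⊤)
    (hA1 : Lrt 0 = H.toSubmodule)
    (hA2 : B.Nondegenerate)
    (hA3 : ∀ ξ ∈ R, ∀ h : ↥H, ξ h = B (t ξ) h)
    {ξ η : Module.Dual F ↥H} (hξ : ξ ∈ R) (hη : η ∈ R) (s : F)
    (hc : ξ + s • η ∈ R) : ((t (ξ + s • η) : L)) = (t ξ : L) + s • (t η : L) := by
  have key : ∀ h : ↥H, B ((t (ξ + s • η) : L) - ((t ξ : L) + s • (t η : L))) h = 0 := by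
    intro h
    have e1 := hA3 _ hc h
    have e2 := hA3 _ hξ h
    have e3 := hA3 _ hη h
    have e4 : (ξ + s • η) h = ξ h + s * η h := by simp
    rw [e4, e2, e3] at e1
    simp only [map_sub, map_add, map_smul, LinearMap.sub_apply, LinearMap.add_apply,
      LinearMap.smul_apply, smul_eq_mul]
    linear_combination -e1
  have hmem : ((t (ξ + s • η) : L) - ((t ξ : L) + s • (t η : L))) ∈ H.toSubmodule := by
    refine Submodule.sub_mem _ (t _).2 (Submodule.add_mem _ (t ξ).2 (Submodule.smul_mem _ _ (t η).2))
  have := H_nondeg hLrt hBinv hdecomp hA1 hA2 hmem (fun h hh => key ⟨h, hh⟩)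
  linear_combination (norm := abel) this

lemma t_zero (hLrt : ∀ ξ (x : L), x ∈ Lrt ξ ↔ ∀ h : ↥H, ⁅(h : L), x⁆ = ξ h • x)
    (hBinv : ∀ x y z : L, B ⁅x, y⁆ z = B x ⁅y, z⁆)
    (hdecomp : ⨆ ξ, Lrt ξ = ⊤)
    (hA1 : Lrt 0 = H.toSubmodule)
    (hA2 : B.Nondegenerate)
    (hA3 : ∀ ξ ∈ R, ∀ h : ↥H, ξ h = B (t ξ) h)
    (h0 : (0 : Module.Dual F ↥H) ∈ R) : ((t 0 : L)) = 0 := by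
  apply H_nondeg hLrt hBinv hdecomp hA1 hA2 (t 0).2
  intro h hh
  have := hA3 _ h0 ⟨h, hh⟩
  simp only [LinearMap.zero_apply] at this
  exact this.symm

lemma t_neg (hLrt : ∀ ξ (x : L), x ∈ Lrt ξ ↔ ∀ h : ↥H, ⁅(h : L), x⁆ = ξ h • x)
    (hBinv : ∀ x y z : L, B ⁅x, y⁆ z = B x ⁅y, z⁆)
    (hdecomp : ⨆ ξ, Lrt ξ = ⊤)
    (hA1 : Lrt 0 = H.toSubmodule)
    (hA2 : B.Nondegenerate)
    (hA3 : ∀ ξ ∈ R, ∀ h : ↥H, ξ h = B (t ξ) h)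
    {ξ : Module.Dual F ↥H} (hξ : ξ ∈ R) (hnξ : -ξ ∈ R) :
    ((t (-ξ) : L)) = -(t ξ : L) := by
  have key : ∀ h : ↥H, B ((t (-ξ) : L) + (t ξ : L)) h = 0 := by
    intro h
    have e1 := hA3 _ hnξ h
    have e2 := hA3 _ hξ h
    simp only [LinearMap.neg_apply] at e1
    simp only [map_add, LinearMap.add_apply]
    linear_combination -e1 - e2
  have hmem : ((t (-ξ) : L) + (t ξ : L)) ∈ H.toSubmodule :=
    Submodule.add_mem _ (t _).2 (t ξ).2
  have := H_nondeg hLrt hBinv hdecomp hA1 hA2 hmem (fun h hh => key ⟨h, hh⟩)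
  linear_combination (norm := abel) this

lemma brkt_eq_t (hLrt : ∀ ξ (x : L), x ∈ Lrt ξ ↔ ∀ h : ↥H, ⁅(h : L), x⁆ = ξ h • x)
    (hBinv : ∀ x y z : L, B ⁅x, y⁆ z = B x ⁅y, z⁆)
    (hdecomp : ⨆ ξ, Lrt ξ = ⊤)
    (hA1 : Lrt 0 = H.toSubmodule)
    (hA2 : B.Nondegenerate)
    (hA3 : ∀ ξ ∈ R, ∀ h : ↥H, ξ h = B (t ξ) h)
    {ξ : Module.Dual F ↥H} {x y : L} (hξ : ξ ∈ R) (hx : x ∈ Lrt ξ)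
    (hy : y ∈ Lrt (-ξ)) : ⁅x, y⁆ = B x y • (t ξ : L) := by
  have hmem : ⁅x, y⁆ ∈ H.toSubmodule := by
    rw [← hA1]
    have := brkt_mem hLrt hx hy
    simpa using this
  have key : ∀ h : ↥H, B (⁅x, y⁆ - B x y • (t ξ : L)) h = 0 := by
    intro h
    have e1 : B ⁅x, y⁆ (h : L) = B x ⁅y, (h : L)⁆ := hBinv x y h
    have e2 : ⁅y, (h : L)⁆ = ξ h • y := by
      rw [← lie_skew, (hLrt _ y).1 hy h]
      simp
    have e3 := hA3 _ hξ h
    simp only [map_sub, map_smul, LinearMap.sub_apply, LinearMap.smul_apply, smul_eq_mul]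
    rw [e1, e2, map_smul, smul_eq_mul, e3]
    ring
  have hsub : (⁅x, y⁆ - B x y • (t ξ : L)) ∈ H.toSubmodule :=
    Submodule.sub_mem _ hmem (Submodule.smul_mem _ _ (t ξ).2)
  have := H_nondeg hLrt hBinv hdecomp hA1 hA2 hsub (fun h hh => key ⟨h, hh⟩)
  linear_combination (norm := abel) this

lemma max_pow {M : Type*} [AddCommGroup M] [Module F M] (T : Module.End F M) {v : M}
    (hv : v ≠ 0) (hN : ∃ N, (T ^ N) v = 0) : ∃ n, (T ^ n) v ≠ 0 ∧ (T ^ (n+1)) v = 0 := by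
  classical
  obtain ⟨N, hN⟩ := hN
  have hex : ∃ k, (T ^ k) v = 0 := ⟨N, hN⟩
  have hk : (T ^ (Nat.find hex)) v = 0 := Nat.find_spec hex
  have hkpos : Nat.find hex ≠ 0 := by
    intro h0
    rw [h0] at hk
    simp only [pow_zero, Module.End.one_apply] at hk
    exact hv hk
  obtain ⟨n, hn⟩ : ∃ n, Nat.find hex = n + 1 :=
    ⟨Nat.find hex - 1, (Nat.succ_pred_eq_of_pos (Nat.pos_of_ne_zero hkpos)).symm⟩
  refine ⟨n, ?_, by rw [← hn]; exact hk⟩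
  exact Nat.find_min hex (by omega)


lemma integrality (hLrt : ∀ ξ (x : L), x ∈ Lrt ξ ↔ ∀ h : ↥H, ⁅(h : L), x⁆ = ξ h • x)
    (hBinv : ∀ x y z : L, B ⁅x, y⁆ z = B x ⁅y, z⁆)
    (hdecomp : ⨆ ξ, Lrt ξ = ⊤)
    (hR : R = {ξ | Lrt ξ ≠ ⊥})
    (hA1 : Lrt 0 = H.toSubmodule)
    (hA2 : B.Nondegenerate)
    (hA3 : ∀ ξ ∈ R, ∀ h : ↥H, ξ h = B (t ξ) h)
    (hform : ∀ ξ ∈ R, ∀ η ∈ R, form ξ η = B (t ξ : L) (t η : L))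
    (hA4 : ∀ α ∈ R, form α α ≠ 0 → ∀ x ∈ Lrt α, ∀ y : L,
      ∃ n : ℕ, ((LieAlgebra.ad F L x) ^ n) y = 0)
    {α ξ : Module.Dual F ↥H} (hα : α ∈ R) (hξ : ξ ∈ R)
    (haniso : B (t α : L) (t α : L) ≠ 0) :
    ∃ m : ℤ, 2 * B (t ξ : L) (t α : L) = (m : F) * B (t α : L) (t α : L) := by
  classical
  set a : F := B (t α : L) (t α : L) with ha
  set s : F := B (t ξ : L) (t α : L) with hs
  have hfa : form α α ≠ 0 := by rw [hform α hα α hα]; exact haniso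
  have hnα : -α ∈ R := neg_root hLrt hBinv hdecomp hR hA2 hα
  have htnα : ((t (-α) : L)) = -(t α : L) := t_neg hLrt hBinv hdecomp hA1 hA2 hA3 hα hnα
  have hfna : form (-α) (-α) ≠ 0 := by
    rw [hform _ hnα _ hnα, htnα]
    simpa using haniso
  have hαbot : Lrt α ≠ ⊥ := by rw [hR] at hα; exact hα
  have hξbot : Lrt ξ ≠ ⊥ := by rw [hR] at hξ; exact hξ
  obtain ⟨e, he, hene⟩ := (Submodule.ne_bot_iff _).1 hαbot
  obtain ⟨f, hf, hbef⟩ := pairing hLrt hBinv hdecomp hR hA2 he hene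
  obtain ⟨v, hv, hvne⟩ := (Submodule.ne_bot_iff _).1 hξbot
  set b : F := B e f with hb
  have hbr : ⁅e, f⁆ = b • (t α : L) :=
    brkt_eq_t hLrt hBinv hdecomp hA1 hA2 hA3 hα he hf
  have comm : ∀ (η' : Module.Dual F ↥H) (z : L), z ∈ Lrt η' →
      ⁅e, ⁅f, z⁆⁆ = ⁅f, ⁅e, z⁆⁆ + (b * η' (t α)) • z := by
    intro η' z hz
    have h1 : ⁅⁅e, f⁆, z⁆ = ⁅e, ⁅f, z⁆⁆ - ⁅f, ⁅e, z⁆⁆ := lie_lie e f z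
    have h2 : ⁅⁅e, f⁆, z⁆ = (b * η' (t α)) • z := by
      rw [hbr, smul_lie, (hLrt η' z).1 hz (t α), smul_smul]
    rw [h2, eq_comm, sub_eq_iff_eq_add'] at h1
    exact h1
  obtain ⟨n, hn1, hn2⟩ := max_pow (LieAlgebra.ad F L e) hvne (hA4 α hα hfa e he v)
  set w : L := ((LieAlgebra.ad F L e) ^ n) v with hwdef
  have hw : w ∈ Lrt (ξ + (n : F) • α) := pow_ad_mem hLrt he n hv
  have hEw : ⁅e, w⁆ = 0 := by
    have hh : ((LieAlgebra.ad F L e) ^ (n+1)) v = ⁅e, w⁆ := by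
      rw [pow_succ', Module.End.mul_apply]; rfl
    rw [← hh]; exact hn2
  obtain ⟨m, hm1, hm2⟩ := max_pow (LieAlgebra.ad F L f) hn1 (hA4 (-α) hnα hfna f hf w)
  have hαtα : α (t α) = a := hA3 α hα (t α)
  have hξtα : ξ (t α) = s := hA3 ξ hξ (t α)
  set δ : ℕ → F := fun j => (b * ((j : F) + 1) / 2) * (2 * s + (2 * (n : F) - (j : F)) * a)
    with hδ
  have hFmem : ∀ j : ℕ, ((LieAlgebra.ad F L f) ^ j) w ∈ Lrt ((ξ + (n : F) • α) + (j : F) • (-α)) :=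
    fun j => pow_ad_mem hLrt hf j hw
  have hFsucc : ∀ j : ℕ, ((LieAlgebra.ad F L f) ^ (j+1)) w = ⁅f, ((LieAlgebra.ad F L f) ^ j) w⁆ := by
    intro j
    rw [pow_succ', Module.End.mul_apply]; rfl
  have main : ∀ j : ℕ, ⁅e, ((LieAlgebra.ad F L f) ^ (j+1)) w⁆ = δ j • ((LieAlgebra.ad F L f) ^ j) w := by
    intro j
    induction j with
    | zero =>
      rw [hFsucc 0]
      have h0 : ((LieAlgebra.ad F L f) ^ 0) w = w := by simp
      rw [h0]
      rw [comm _ w hw, hEw, lie_zero, zero_add]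
      congr 1
      simp only [LinearMap.add_apply, LinearMap.smul_apply, smul_eq_mul, hαtα, hξtα, hδ]
      push_cast
      ring
    | succ j ih =>
      rw [hFsucc (j+1)]
      rw [comm _ _ (hFmem (j+1))]
      have hz : ⁅e, ((LieAlgebra.ad F L f) ^ (j+1)) w⁆ = δ j • ((LieAlgebra.ad F L f) ^ j) w := ih
      rw [hz, lie_smul, ← hFsucc j]
      rw [← add_smul]
      congr 1
      simp only [LinearMap.add_apply, LinearMap.smul_apply, LinearMap.neg_apply, smul_eq_mul,
        hαtα, hξtα, hδ]
      push_cast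
      ring
  have hzero : δ m • ((LieAlgebra.ad F L f) ^ m) w = 0 := by
    rw [← main m, hm2, lie_zero]
  have hδm : δ m = 0 := by
    rcases smul_eq_zero.1 hzero with h | h
    · exact h
    · exact absurd h hm1
  have hb2 : b * ((m : F) + 1) / 2 ≠ 0 := by
    apply div_ne_zero
    · exact mul_ne_zero hbef (by exact_mod_cast Nat.succ_ne_zero m)
    · exact two_ne_zero
  have hkey : 2 * s + (2 * (n : F) - (m : F)) * a = 0 := by
    rcases mul_eq_zero.1 hδm with h | h
    · exact absurd h hb2
    · exact h
  refine ⟨(m : ℤ) - 2 * (n : ℤ), ?_⟩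
  push_cast
  linear_combination hkey


lemma heisenberg (hLrt : ∀ ξ (x : L), x ∈ Lrt ξ ↔ ∀ h : ↥H, ⁅(h : L), x⁆ = ξ h • x)
    (hBinv : ∀ x y z : L, B ⁅x, y⁆ z = B x ⁅y, z⁆)
    (hdecomp : ⨆ ξ, Lrt ξ = ⊤)
    (hR : R = {ξ | Lrt ξ ≠ ⊥})
    (hA1 : Lrt 0 = H.toSubmodule)
    (hA2 : B.Nondegenerate)
    (hA3 : ∀ ξ ∈ R, ∀ h : ↥H, ξ h = B (t ξ) h)
    {δ γ : Module.Dual F ↥H} (hδ : δ ∈ R) (hδδ : B (t δ : L) (t δ : L) = 0)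
    (hγ : γ ∈ R) (hcne : B (t γ : L) (t δ : L) ≠ 0)
    (hfin : {n : ℤ | Lrt (γ + (n : F) • δ) ≠ ⊥}.Finite) : False := by
  classical
  set S : Set ℤ := {n : ℤ | Lrt (γ + (n : F) • δ) ≠ ⊥} with hS
  have h0S : (0 : ℤ) ∈ S := by
    simp only [hS, Set.mem_setOf_eq, Int.cast_zero, zero_smul, add_zero]
    rw [hR] at hγ; exact hγ
  have hSne : hfin.toFinset.Nonempty := ⟨0, hfin.mem_toFinset.2 h0S⟩
  set nmax : ℤ := hfin.toFinset.max' hSne with hnmax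
  set nmin : ℤ := hfin.toFinset.min' hSne with hnmin
  have hmaxS : nmax ∈ S := hfin.mem_toFinset.1 (hfin.toFinset.max'_mem hSne)
  have hminmax : nmin ≤ nmax := hfin.toFinset.min'_le _ (hfin.toFinset.max'_mem hSne)
  -- x, y Heisenberg pair
  have hδbot : Lrt δ ≠ ⊥ := by rw [hR] at hδ; exact hδ
  obtain ⟨x, hx, hxne⟩ := (Submodule.ne_bot_iff _).1 hδbot
  obtain ⟨y, hy, hbxy⟩ := pairing hLrt hBinv hdecomp hR hA2 hx hxne
  -- w top vector
  obtain ⟨w, hw, hwne⟩ := (Submodule.ne_bot_iff _).1 hmaxS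
  set lam : F := B x y * B (t γ : L) (t δ : L) with hlam
  have hlamne : lam ≠ 0 := mul_ne_zero hbxy hcne
  have hbr : ⁅x, y⁆ = B x y • (t δ : L) := brkt_eq_t hLrt hBinv hdecomp hA1 hA2 hA3 hδ hx hy
  -- commutator identity: on any root space of the form γ + s • δ the bracket acts by lam
  have comm : ∀ (s : F) (z : L), z ∈ Lrt (γ + s • δ) →
      ⁅x, ⁅y, z⁆⁆ = ⁅y, ⁅x, z⁆⁆ + lam • z := by
    intro s z hz
    have h1 : ⁅⁅x, y⁆, z⁆ = ⁅x, ⁅y, z⁆⁆ - ⁅y, ⁅x, z⁆⁆ := lie_lie x y z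
    have heval : (γ + s • δ) (t δ) = B (t γ : L) (t δ : L) := by
      simp only [LinearMap.add_apply, LinearMap.smul_apply, smul_eq_mul]
      rw [hA3 δ hδ (t δ), hδδ, mul_zero, add_zero, hA3 γ hγ (t δ)]
    have h2 : ⁅⁅x, y⁆, z⁆ = lam • z := by
      rw [hbr, smul_lie, (hLrt _ z).1 hz (t δ), heval, smul_smul]
    rw [h2, eq_comm, sub_eq_iff_eq_add'] at h1
    exact h1
  -- ⁅x, w⁆ = 0
  have htop : Lrt (γ + ((nmax + 1 : ℤ) : F) • δ) = ⊥ := by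
    by_contra hne
    have : (nmax + 1) ∈ S := hne
    have := hfin.toFinset.le_max' _ (hfin.mem_toFinset.2 this)
    omega
  have hXw : ⁅x, w⁆ = 0 := by
    have hmem := brkt_mem hLrt hx hw
    have heq : δ + (γ + (nmax : F) • δ) = γ + ((nmax + 1 : ℤ) : F) • δ := by
      push_cast
      module
    rw [heq, htop] at hmem
    simpa using hmem
  -- Y powers membership
  have hYmem : ∀ j : ℕ, ((LieAlgebra.ad F L y) ^ j) w ∈ Lrt (γ + ((nmax - (j : ℤ) : ℤ) : F) • δ) := by
    intro j
    have := pow_ad_mem hLrt hy j hw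
    have heq : (γ + (nmax : F) • δ) + (j : F) • (-δ) = γ + ((nmax - (j : ℤ) : ℤ) : F) • δ := by
      push_cast
      module
    rwa [heq] at this
  have hYsucc : ∀ j : ℕ, ((LieAlgebra.ad F L y) ^ (j+1)) w = ⁅y, ((LieAlgebra.ad F L y) ^ j) w⁆ := by
    intro j
    rw [pow_succ', Module.End.mul_apply]; rfl
  -- main identity
  have main : ∀ j : ℕ, ⁅x, ((LieAlgebra.ad F L y) ^ (j+1)) w⁆
      = (((j : F) + 1) * lam) • ((LieAlgebra.ad F L y) ^ j) w := by
    intro j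
    induction j with
    | zero =>
      rw [hYsucc 0]
      have h0 : ((LieAlgebra.ad F L y) ^ 0) w = w := by simp
      rw [h0, comm ((nmax : ℤ) : F) w (by simpa using hw), hXw, lie_zero, zero_add]
      congr 1
      ring
    | succ j ih =>
      rw [hYsucc (j+1), comm (((nmax - (j+1 : ℤ) : ℤ)) : F) _ (by simpa using hYmem (j+1)),
        ih, lie_smul, ← hYsucc j, ← add_smul]
      congr 1
      push_cast
      ring
  -- the D-th power vanishes
  set D : ℕ := (nmax - nmin + 1).toNat with hD
  have hDcast : ((D : ℤ)) = nmax - nmin + 1 := Int.toNat_of_nonneg (by omega)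
  have hbot2 : Lrt (γ + ((nmax - (D : ℤ) : ℤ) : F) • δ) = ⊥ := by
    by_contra hne
    have hmem : (nmax - (D : ℤ)) ∈ S := hne
    have := hfin.toFinset.min'_le _ (hfin.mem_toFinset.2 hmem)
    omega
  have hYD : ((LieAlgebra.ad F L y) ^ D) w = 0 := by
    have := hYmem D
    rw [hbot2] at this
    simpa using this
  -- descent
  have desc : ∀ j : ℕ, ((LieAlgebra.ad F L y) ^ j) w = 0 → w = 0 := by
    intro j
    induction j with
    | zero => intro h; simpa using h
    | succ j ih =>
      intro h
      apply ih
      have h2 : (((j : F) + 1) * lam) • ((LieAlgebra.ad F L y) ^ j) w = 0 := by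
        rw [← main j, h, lie_zero]
      rcases smul_eq_zero.1 h2 with hcoef | hzero
      · exfalso
        have : ((j : F) + 1) = 0 ∨ lam = 0 := mul_eq_zero.1 hcoef
        rcases this with h' | h'
        · exact (by exact_mod_cast Nat.succ_ne_zero j : ((j : F) + 1) ≠ 0) h'
        · exact hlamne h'
      · exact hzero
  exact hwne (desc D hYD)

lemma iso_orth_aniso (hLrt : ∀ ξ (x : L), x ∈ Lrt ξ ↔ ∀ h : ↥H, ⁅(h : L), x⁆ = ξ h • x)
    (hBsym : ∀ x y : L, B x y = B y x)
    (hBinv : ∀ x y z : L, B ⁅x, y⁆ z = B x ⁅y, z⁆)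
    (hdecomp : ⨆ ξ, Lrt ξ = ⊤)
    (hR : R = {ξ | Lrt ξ ≠ ⊥})
    (hA1 : Lrt 0 = H.toSubmodule)
    (hA2 : B.Nondegenerate)
    (hA3 : ∀ ξ ∈ R, ∀ h : ↥H, ξ h = B (t ξ) h)
    (hform : ∀ ξ ∈ R, ∀ η ∈ R, form ξ η = B (t ξ : L) (t η : L))
    (hA4 : ∀ α ∈ R, form α α ≠ 0 → ∀ x ∈ Lrt α, ∀ y : L,
      ∃ n : ℕ, ((LieAlgebra.ad F L x) ^ n) y = 0)
    {δ α : Module.Dual F ↥H} (hδ : δ ∈ R) (hδδ : B (t δ : L) (t δ : L) = 0)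
    (hα : α ∈ R) (haniso : B (t α : L) (t α : L) ≠ 0) : B (t α : L) (t δ : L) = 0 := by
  classical
  by_contra hc
  set a : F := B (t α : L) (t α : L) with ha
  set c : F := B (t α : L) (t δ : L) with hcdef
  -- bound the string
  have hstring : ∀ n : ℤ, n ≠ 0 → Lrt (α + (n : F) • δ) ≠ ⊥ →
      ((n : F) * c = -a ∨ (n : F) * c = -a / 2) := by
    intro n hn0 hnbot
    have hγn : (α + (n : F) • δ) ∈ R := by rw [hR]; exact hnbot
    have htγ : ((t (α + (n : F) • δ) : L)) = (t α : L) + (n : F) • (t δ : L) :=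
      t_comb hLrt hBinv hdecomp hA1 hA2 hA3 hα hδ ((n : F)) hγn
    have hsym : B (t δ : L) (t α : L) = c := (hBsym _ _).trans hcdef.symm
    have hnorm : B (t (α + (n : F) • δ) : L) (t (α + (n : F) • δ) : L) = a + 2 * ((n : F) * c) := by
      rw [htγ]
      simp only [map_add, map_smul, LinearMap.add_apply, LinearMap.smul_apply, smul_eq_mul]
      rw [hsym, hδδ]
      ring
    have hdot1 : B (t (α + (n : F) • δ) : L) (t α : L) = a + (n : F) * c := by
      rw [htγ]
      simp only [map_add, map_smul, LinearMap.add_apply, LinearMap.smul_apply, smul_eq_mul, hsym]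
      rfl
    have hdot2 : B (t α : L) (t (α + (n : F) • δ) : L) = a + (n : F) * c := by
      rw [hBsym]
      exact hdot1
    obtain ⟨m₁, hm₁⟩ := integrality hLrt hBinv hdecomp hR hA1 hA2 hA3 hform hA4 (α := α) (ξ := α + (n : F) • δ) hα hγn haniso
    rw [hdot1, ← ha] at hm₁
    by_cases hiso : a + 2 * ((n : F) * c) = 0
    · right
      have : (n : F) * c = -a / 2 := by linear_combination hiso / 2
      exact this
    · left
      obtain ⟨m₂, hm₂⟩ := integrality hLrt hBinv hdecomp hR hA1 hA2 hA3 hform hA4 (α := α + (n : F) • δ) (ξ := α) hγn hα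
        (by rw [hnorm]; exact hiso)
      rw [hdot2, hnorm] at hm₂
      have key : (((m₁ - m₂ * (m₁ - 1)) : ℤ) : F) * a = 0 := by
        push_cast
        linear_combination hm₂ + ((m₂ : F) - 1) * hm₁
      have hintz : ((m₁ - m₂ * (m₁ - 1)) : ℤ) = 0 := by
        rcases mul_eq_zero.1 key with h' | h'
        · exact_mod_cast h'
        · exact absurd h' haniso
      have hmeq : m₁ = m₂ * (m₁ - 1) := by omega
      have hunit : (m₂ - 1) * (m₁ - 1) = 1 := by linear_combination -hmeq
      rcases Int.mul_eq_one_iff_eq_one_or_neg_one.1 hunit with ⟨h1, h2⟩ | ⟨h1, h2⟩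
      · -- m₁ - 1 = 1, m₁ = 2 : then 2nc = 0, contradiction
        exfalso
        have hm1v : m₁ = 2 := by omega
        rw [hm1v] at hm₁
        have : (n : F) * c = 0 := by
          push_cast at hm₁
          linear_combination hm₁ / 2
        rcases mul_eq_zero.1 this with h' | h'
        · exact hn0 (by exact_mod_cast h')
        · exact hc h'
      · -- m₁ - 1 = -1, m₁ = 0 : then a + nc = 0
        have hm1v : m₁ = 0 := by omega
        rw [hm1v] at hm₁
        push_cast at hm₁
        linear_combination hm₁ / 2
  -- finiteness of string
  have hsub : {n : ℤ | Lrt (α + (n : F) • δ) ≠ ⊥} ⊆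
      {(0 : ℤ)} ∪ {n : ℤ | (n : F) * c = -a} ∪ {n : ℤ | (n : F) * c = -a / 2} := by
    intro n hn
    by_cases hn0 : n = 0
    · left; left; exact hn0
    · rcases hstring n hn0 hn with h' | h'
      · left; right; exact h'
      · right; exact h'
  have hsing1 : {n : ℤ | (n : F) * c = -a}.Subsingleton := by
    intro p hp q hq
    have : ((p : F) - (q : F)) * c = 0 := by
      simp only [Set.mem_setOf_eq] at hp hq
      linear_combination hp - hq
    rcases mul_eq_zero.1 this with h' | h'
    · have : (p : F) = (q : F) := by linear_combination h'
      exact_mod_cast this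
    · exact absurd h' hc
  have hsing2 : {n : ℤ | (n : F) * c = -a / 2}.Subsingleton := by
    intro p hp q hq
    have : ((p : F) - (q : F)) * c = 0 := by
      simp only [Set.mem_setOf_eq] at hp hq
      linear_combination hp - hq
    rcases mul_eq_zero.1 this with h' | h'
    · have : (p : F) = (q : F) := by linear_combination h'
      exact_mod_cast this
    · exact absurd h' hc
  have hfin : {n : ℤ | Lrt (α + (n : F) • δ) ≠ ⊥}.Finite :=
    Set.Finite.subset (((Set.finite_singleton 0).union hsing1.finite).union hsing2.finite) hsub
  exact heisenberg hLrt hBinv hdecomp hR hA1 hA2 hA3 hδ hδδ hα hc hfin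

lemma iso_orth_iso (hLrt : ∀ ξ (x : L), x ∈ Lrt ξ ↔ ∀ h : ↥H, ⁅(h : L), x⁆ = ξ h • x)
    (hBsym : ∀ x y : L, B x y = B y x)
    (hBinv : ∀ x y z : L, B ⁅x, y⁆ z = B x ⁅y, z⁆)
    (hdecomp : ⨆ ξ, Lrt ξ = ⊤)
    (hR : R = {ξ | Lrt ξ ≠ ⊥})
    (hA1 : Lrt 0 = H.toSubmodule)
    (hA2 : B.Nondegenerate)
    (hA3 : ∀ ξ ∈ R, ∀ h : ↥H, ξ h = B (t ξ) h)
    (hform : ∀ ξ ∈ R, ∀ η ∈ R, form ξ η = B (t ξ : L) (t η : L))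
    (hA4 : ∀ α ∈ R, form α α ≠ 0 → ∀ x ∈ Lrt α, ∀ y : L,
      ∃ n : ℕ, ((LieAlgebra.ad F L x) ^ n) y = 0)
    {δ ε : Module.Dual F ↥H} (hδ : δ ∈ R) (hδδ : B (t δ : L) (t δ : L) = 0)
    (hε : ε ∈ R) (hεε : B (t ε : L) (t ε : L) = 0) : B (t ε : L) (t δ : L) = 0 := by
  classical
  by_contra hc
  set c : F := B (t ε : L) (t δ : L) with hcdef
  have hsub : {n : ℤ | Lrt (ε + (n : F) • δ) ≠ ⊥} ⊆ {(0 : ℤ)} := by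
    intro n hn
    by_contra hn0
    have hn0 : n ≠ 0 := hn0
    have hγn : (ε + (n : F) • δ) ∈ R := by rw [hR]; exact hn
    have htγ : ((t (ε + (n : F) • δ) : L)) = (t ε : L) + (n : F) • (t δ : L) :=
      t_comb hLrt hBinv hdecomp hA1 hA2 hA3 hε hδ ((n : F)) hγn
    have hsym : B (t δ : L) (t ε : L) = c := (hBsym _ _).trans hcdef.symm
    have hnorm : B (t (ε + (n : F) • δ) : L) (t (ε + (n : F) • δ) : L) = 2 * ((n : F) * c) := by
      rw [htγ]
      simp only [map_add, map_smul, LinearMap.add_apply, LinearMap.smul_apply, smul_eq_mul]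
      rw [hsym, hδδ, hεε]
      ring
    have hnne : B (t (ε + (n : F) • δ) : L) (t (ε + (n : F) • δ) : L) ≠ 0 := by
      rw [hnorm]
      refine mul_ne_zero two_ne_zero (mul_ne_zero ?_ hc)
      exact_mod_cast hn0
    have horth := iso_orth_aniso hLrt hBsym hBinv hdecomp hR hA1 hA2 hA3 hform hA4 hδ hδδ hγn hnne
    apply hc
    rw [htγ] at horth
    simp only [map_add, map_smul, LinearMap.add_apply, LinearMap.smul_apply, smul_eq_mul] at horth
    rw [hδδ] at horth  -- horth : c + n * 0 = 0 roughly
    simpa using horth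
  exact heisenberg hLrt hBinv hdecomp hR hA1 hA2 hA3 hδ hδδ hε hc
    (Set.Finite.subset (Set.finite_singleton 0) hsub)


lemma iso_zero (hLrt : ∀ ξ (x : L), x ∈ Lrt ξ ↔ ∀ h : ↥H, ⁅(h : L), x⁆ = ξ h • x)
    (hBsym : ∀ x y : L, B x y = B y x)
    (hBinv : ∀ x y z : L, B ⁅x, y⁆ z = B x ⁅y, z⁆)
    (hdecomp : ⨆ ξ, Lrt ξ = ⊤)
    (hR : R = {ξ | Lrt ξ ≠ ⊥})
    (hA1 : Lrt 0 = H.toSubmodule)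
    (hA2 : B.Nondegenerate)
    (hA3 : ∀ ξ ∈ R, ∀ h : ↥H, ξ h = B (t ξ) h)
    (hform : ∀ ξ ∈ R, ∀ η ∈ R, form ξ η = B (t ξ : L) (t η : L))
    (hA4 : ∀ α ∈ R, form α α ≠ 0 → ∀ x ∈ Lrt α, ∀ y : L,
      ∃ n : ℕ, ((LieAlgebra.ad F L x) ^ n) y = 0)
    (hnull0 : ∀ v : Module.Dual F ↥H,
      (∃ (n : ℕ) (q : Fin n → ℚ) (ζ : Fin n → Module.Dual F ↥H),
        (∀ i, ζ i ∈ R) ∧ v = ∑ i, (q i : F) • ζ i) →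
      (∀ w ∈ R, form v w = 0) → v = 0)
    {δ : Module.Dual F ↥H} (hδ : δ ∈ R) (hδδ : B (t δ : L) (t δ : L) = 0) :
    δ = 0 := by
  apply hnull0 δ ⟨1, fun _ => (1 : ℚ), fun _ => δ, fun _ => hδ, by simp⟩
  intro w hw
  rw [hform δ hδ w hw]
  by_cases hww : B (t w : L) (t w : L) = 0
  · exact iso_orth_iso hLrt hBsym hBinv hdecomp hR hA1 hA2 hA3 hform hA4 (δ := w) (ε := δ) hw hww hδ hδδ
  · exact (hBsym _ _).trans (iso_orth_aniso hLrt hBsym hBinv hdecomp hR hA1 hA2 hA3 hform hA4 hδ hδδ hw hww)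

-- a ℚ-linear functional on F sending 1 to 1
lemma exists_phi : ∃ φ : F →ₗ[ℚ] ℚ, φ 1 = 1 := by
  obtain ⟨W, hW⟩ := Submodule.exists_isCompl (Submodule.span ℚ {(1:F)})
  refine ⟨(LinearEquiv.toSpanNonzeroSingleton ℚ F 1 one_ne_zero).symm.toLinearMap.comp
    (Submodule.linearProjOfIsCompl _ W hW), ?_⟩
  have h1 : ((Submodule.linearProjOfIsCompl _ W hW) (1:F)) = ⟨1, Submodule.mem_span_singleton_self _⟩ :=
    Submodule.linearProjOfIsCompl_apply_left hW ⟨1, Submodule.mem_span_singleton_self _⟩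
  simp only [LinearMap.comp_apply, h1, LinearEquiv.coe_coe]
  have h2 : (LinearEquiv.toSpanNonzeroSingleton ℚ F 1 one_ne_zero) 1
      = ⟨1, Submodule.mem_span_singleton_self _⟩ := by
    ext; simp [LinearEquiv.toSpanNonzeroSingleton]
  rw [← h2, LinearEquiv.symm_apply_apply]

lemma central_core_zero (hLrt : ∀ ξ (x : L), x ∈ Lrt ξ ↔ ∀ h : ↥H, ⁅(h : L), x⁆ = ξ h • x)
    (hBsym : ∀ x y : L, B x y = B y x)
    (hBinv : ∀ x y z : L, B ⁅x, y⁆ z = B x ⁅y, z⁆)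
    (hdecomp : ⨆ ξ, Lrt ξ = ⊤)
    (hR : R = {ξ | Lrt ξ ≠ ⊥})
    (hA1 : Lrt 0 = H.toSubmodule)
    (hA2 : B.Nondegenerate)
    (hA3 : ∀ ξ ∈ R, ∀ h : ↥H, ξ h = B (t ξ) h)
    (hform : ∀ ξ ∈ R, ∀ η ∈ R, form ξ η = B (t ξ : L) (t η : L))
    (hA4 : ∀ α ∈ R, form α α ≠ 0 → ∀ x ∈ Lrt α, ∀ y : L,
      ∃ n : ℕ, ((LieAlgebra.ad F L x) ^ n) y = 0)
    (hnull0 : ∀ v : Module.Dual F ↥H,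
      (∃ (n : ℕ) (q : Fin n → ℚ) (ζ : Fin n → Module.Dual F ↥H),
        (∀ i, ζ i ∈ R) ∧ v = ∑ i, (q i : F) • ζ i) →
      (∀ w ∈ R, form v w = 0) → v = 0)
   
    (hscaleB : ∀ β ∈ R, B (t β : L) (t β : L) ≠ 0 → ∃ q : ℚ, B (t β : L) (t β : L) = (q : F)) :
    ∀ (k : ℕ) (c : Fin k → F) (α : Fin k → Module.Dual F ↥H),
    (∀ i, α i ∈ R) → (∀ i, B (t (α i) : L) (t (α i) : L) ≠ 0) →
    (∀ η ∈ R, B (t η : L) (∑ i, c i • (t (α i) : L)) = 0) →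
    ∑ i, c i • (t (α i) : L) = 0 := by
  intro k
  induction k with
  | zero => intro c α _ _ _; simp
  | succ k ih =>
    intro c α hαR hαan hsys
    by_cases hind : ∀ q : Fin (k+1) → ℚ, (∑ i, ((q i : F)) • α i = 0) → ∀ i, q i = 0
    · -- α's are ℚ-independent
      by_cases hc0 : ∀ i, c i = 0
      · have hz : ∀ i, c i • (t (α i) : L) = 0 := fun i => by rw [hc0 i, zero_smul]
        simp [hz]
      · exfalso
        push_neg at hc0
        obtain ⟨j₀, hj₀⟩ := hc0
        obtain ⟨φ, hφ1⟩ := exists_phi (F := F)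
        set d : Fin (k+1) → F := fun i => c i / c j₀ with hd
        have hsysd : ∀ η ∈ R, ∑ i, d i * B (t η : L) (t (α i) : L) = 0 := by
          intro η hη
          have h0 := hsys η hη
          rw [map_sum] at h0
          have h1 : ∑ i, c i * B (t η : L) (t (α i) : L) = 0 := by
            rw [← h0]
            exact Finset.sum_congr rfl fun i _ => by rw [map_smul, smul_eq_mul]
          have h2 : (c j₀)⁻¹ * (∑ i, c i * B (t η : L) (t (α i) : L)) = 0 := by
            rw [h1, mul_zero]
          rw [Finset.mul_sum] at h2
          rw [← h2]
          exact Finset.sum_congr rfl fun i _ => by rw [hd]; field_simp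
        set v : Module.Dual F ↥H := ∑ i, ((φ (d i) : ℚ) : F) • α i with hv
        have hvrad : ∀ w ∈ R, form v w = 0 := by
          intro w hw
          choose r hr using fun i => integrality hLrt hBinv hdecomp hR hA1 hA2 hA3 hform hA4 (α := α i) (ξ := w) (hαR i) hw (hαan i)
          choose q hq using fun i => hscaleB (α i) (hαR i) (hαan i)
          -- B (t w) (t (α i)) = ((r i : ℚ) * q i / 2 : ℚ) cast
          have hBr : ∀ i, B (t w : L) (t (α i) : L) = (((r i : ℚ) * q i / 2 : ℚ) : F) := by
            intro i
            have := hr i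
            rw [hq i] at this
            push_cast
            linear_combination this / 2
          have hq0 : ∑ i, ((r i : ℚ) * q i / 2) * φ (d i) = 0 := by
            have hFeq : ∑ i, ((((r i : ℚ) * q i / 2 : ℚ)) • d i) = (0 : F) := by
              rw [← hsysd w hw]
              refine Finset.sum_congr rfl fun i _ => ?_
              rw [hBr i, Rat.smul_def, mul_comm]
            have := congrArg φ hFeq
            rw [map_sum, map_zero] at this
            rw [← this]
            exact Finset.sum_congr rfl fun i _ => by rw [map_smul, smul_eq_mul]
          rw [hv, map_sum, LinearMap.sum_apply]
          have hterm : ∀ i, ((form (((φ (d i) : ℚ) : F) • α i)) w)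
              = (((r i : ℚ) * q i / 2 : ℚ) : F) * ((φ (d i) : ℚ) : F) := by
            intro i
            rw [map_smul, LinearMap.smul_apply, smul_eq_mul, hform (α i) (hαR i) w hw]
            rw [(hBsym _ _ : B (t (α i) : L) (t w : L) = B (t w : L) (t (α i) : L)), hBr i]
            ring
          rw [Finset.sum_congr rfl fun i _ => hterm i]
          have : (((∑ i, ((r i : ℚ) * q i / 2) * φ (d i) : ℚ)) : F) = 0 := by
            rw [hq0]; norm_num
          rw [← this]
          push_cast
          ring
        have hv0 : v = 0 := hnull0 v ⟨k+1, fun i => φ (d i), α, hαR, hv⟩ hvrad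
        have hall0 := hind (fun i => φ (d i)) (by rw [← hv]; exact hv0)
        have hdj₀ : d j₀ = 1 := by rw [hd]; exact div_self hj₀
        have hzz : φ (d j₀) = 0 := hall0 j₀
        rw [hdj₀, hφ1] at hzz
        exact one_ne_zero hzz
    · -- dependent case: eliminate one vector
      push_neg at hind
      obtain ⟨qq, hqrel, j₀, hqj₀⟩ := hind
      -- the corresponding relation among the t's
      have trel : ∑ i, (qq i : F) • (t (α i) : L) = 0 := by
        apply H_nondeg hLrt hBinv hdecomp hA1 hA2
        · exact Submodule.sum_mem _ fun i _ => Submodule.smul_mem _ _ (t (α i)).2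
        · intro h hh
          rw [map_sum, LinearMap.sum_apply]
          have hterm : ∀ i, B ((qq i : F) • (t (α i) : L)) h = (qq i : F) * (α i) ⟨h, hh⟩ := by
            intro i
            rw [map_smul, LinearMap.smul_apply, smul_eq_mul, hA3 (α i) (hαR i) ⟨h, hh⟩]
          rw [Finset.sum_congr rfl fun i _ => hterm i]
          have happ := congrArg (fun (ψ : Module.Dual F ↥H) => ψ ⟨h, hh⟩) hqrel
          simp only [LinearMap.zero_apply] at happ
          rw [← happ]
          simp [LinearMap.sum_apply, LinearMap.smul_apply, smul_eq_mul]
      have hqj₀F : ((qq j₀ : F)) ≠ 0 := by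
        rw [Rat.cast_ne_zero]
        exact hqj₀
      rw [Fin.sum_univ_succAbove (fun i => (qq i : F) • (t (α i) : L)) j₀] at trel
      have h1 : (qq j₀ : F) • (t (α j₀) : L)
          = - ∑ i' : Fin k, (qq (j₀.succAbove i') : F) • (t (α (j₀.succAbove i')) : L) :=
        eq_neg_of_add_eq_zero_left trel
      have htj₀ : (t (α j₀) : L) = ∑ i' : Fin k,
          (-(qq (j₀.succAbove i') : F) / (qq j₀ : F)) • (t (α (j₀.succAbove i')) : L) := by
        have h2 : (t (α j₀) : L) = ((qq j₀ : F))⁻¹ • ((qq j₀ : F) • (t (α j₀) : L)) := by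
          rw [smul_smul, inv_mul_cancel₀ hqj₀F, one_smul]
        rw [h2, h1, smul_neg, Finset.smul_sum, ← Finset.sum_neg_distrib]
        refine Finset.sum_congr rfl fun i' _ => ?_
        rw [smul_smul, ← neg_smul]
        congr 1
        field_simp
      have hgoal : ∑ i, c i • (t (α i) : L)
          = ∑ i' : Fin k, (c (j₀.succAbove i')
              - c j₀ * ((qq (j₀.succAbove i') : F) / (qq j₀ : F)))
            • (t (α (j₀.succAbove i')) : L) := by
        rw [Fin.sum_univ_succAbove (fun i => c i • (t (α i) : L)) j₀, htj₀, Finset.smul_sum,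
          ← Finset.sum_add_distrib]
        refine Finset.sum_congr rfl fun i' _ => ?_
        rw [smul_smul, ← add_smul]
        congr 1
        field_simp
        ring
      rw [hgoal]
      refine ih _ _ (fun i' => hαR _) (fun i' => hαan _) (fun η hη => ?_)
      rw [← hgoal]
      exact hsys η hη


lemma core_H_stable (hLrt : ∀ ξ (x : L), x ∈ Lrt ξ ↔ ∀ h : ↥H, ⁅(h : L), x⁆ = ξ h • x)
    (hLcdef : Lc = LieSubalgebra.lieSpan F L
      (⋃ α ∈ {α | α ∈ R ∧ form α α ≠ 0}, (Lrt α : Set L))) : ∀ h ∈ H.toSubmodule, ∀ x ∈ Lc, ⁅h, x⁆ ∈ Lc := by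
  set K₀ : Submodule F L :=
    { carrier := {x | x ∈ Lc ∧ ∀ h ∈ H.toSubmodule, ⁅h, x⁆ ∈ Lc}
      add_mem' := by
        rintro a b ⟨ha1, ha2⟩ ⟨hb1, hb2⟩
        exact ⟨Lc.add_mem ha1 hb1, fun h hh => by
          rw [lie_add]; exact Lc.add_mem (ha2 h hh) (hb2 h hh)⟩
      zero_mem' := ⟨Lc.zero_mem, fun h hh => by rw [lie_zero]; exact Lc.zero_mem⟩
      smul_mem' := by
        rintro a x ⟨hx1, hx2⟩
        exact ⟨Lc.smul_mem a hx1, fun h hh => by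
          rw [lie_smul]; exact Lc.smul_mem a (hx2 h hh)⟩ } with hK₀
  set K : LieSubalgebra F L :=
    { toSubmodule := K₀
      lie_mem' := by
        rintro x y ⟨hx1, hx2⟩ ⟨hy1, hy2⟩
        refine ⟨Lc.lie_mem hx1 hy1, fun h hh => ?_⟩
        rw [leibniz_lie]
        exact Lc.add_mem (Lc.lie_mem (hx2 h hh) hy1) (Lc.lie_mem hx1 (hy2 h hh)) } with hK
  have hLcK : Lc ≤ K := by
    rw [hLcdef]
    rw [LieSubalgebra.lieSpan_le]
    intro x hx
    simp only [Set.mem_iUnion, SetLike.mem_coe] at hx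
    obtain ⟨α, hα, hxα⟩ := hx
    constructor
    · rw [hLcdef]
      exact LieSubalgebra.subset_lieSpan (by
        simp only [Set.mem_iUnion, SetLike.mem_coe]
        exact ⟨α, hα, hxα⟩)
    · intro h hh
      have := (hLrt α x).1 hxα ⟨h, hh⟩
      rw [this]
      rw [hLcdef]
      exact Submodule.smul_mem _ _ (LieSubalgebra.subset_lieSpan (by
        simp only [Set.mem_iUnion, SetLike.mem_coe]
        exact ⟨α, hα, hxα⟩))
  intro h hh x hx
  exact ((hLcK hx).2) h hh


lemma core_inf_H (hLrt : ∀ ξ (x : L), x ∈ Lrt ξ ↔ ∀ h : ↥H, ⁅(h : L), x⁆ = ξ h • x)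
    (habelian : ∀ x y : ↥H, ⁅x, y⁆ = 0)
    (hBinv : ∀ x y z : L, B ⁅x, y⁆ z = B x ⁅y, z⁆)
    (hdecomp : ⨆ ξ, Lrt ξ = ⊤)
    (hindep : iSupIndep Lrt)
    (hR : R = {ξ | Lrt ξ ≠ ⊥})
    (hA1 : Lrt 0 = H.toSubmodule)
    (hA2 : B.Nondegenerate)
    (hA3 : ∀ ξ ∈ R, ∀ h : ↥H, ξ h = B (t ξ) h)
    (hform : ∀ ξ ∈ R, ∀ η ∈ R, form ξ η = B (t ξ : L) (t η : L))
    (hLcdef : Lc = LieSubalgebra.lieSpan F L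
      (⋃ α ∈ {α | α ∈ R ∧ form α α ≠ 0}, (Lrt α : Set L)))
    (haniso_all : ∀ ξ ∈ R, ξ ≠ 0 → B (t ξ : L) (t ξ : L) ≠ 0) :
    ∀ v ∈ Lc, v ∈ H.toSubmodule →
      v ∈ Submodule.span F {x : L | ∃ α, (α ∈ R ∧ form α α ≠ 0) ∧ x = (t α : L)} := by
  classical
  set genT : Set L := {x : L | ∃ α, (α ∈ R ∧ form α α ≠ 0) ∧ x = (t α : L)} with hgenT
  set T : Submodule F L := Submodule.span F genT with hT
  set s : Set L := (T : Set L) ∪ ⋃ ξ : Module.Dual F ↥H, ⋃ (_ : ξ ≠ 0), (Lrt ξ : Set L)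
    with hs
  have hTH : T ≤ H.toSubmodule := by
    rw [hT, Submodule.span_le]
    rintro x ⟨α, hα, rfl⟩
    exact (t α).2
  have hspan : Submodule.span F s = T ⊔ (⨆ ξ, ⨆ (_ : ξ ≠ (0 : Module.Dual F ↥H)), Lrt ξ) := by
    rw [hs, Submodule.span_union, Submodule.span_eq]
    congr 1
    rw [Submodule.span_iUnion]
    refine iSup_congr fun ξ => ?_
    rw [Submodule.span_iUnion]
    exact iSup_congr fun _ => Submodule.span_eq _
  -- base case of bracket closure
  have hbase : ∀ x ∈ s, ∀ y ∈ s, ⁅x, y⁆ ∈ Submodule.span F s := by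
    have hsub1 : (T : Set L) ⊆ s := fun x hx => Or.inl hx
    have hsub2 : ∀ (ξ : Module.Dual F ↥H), ξ ≠ 0 → ∀ x ∈ Lrt ξ, x ∈ Submodule.span F s := by
      intro ξ hξ x hx
      apply Submodule.subset_span
      right
      simp only [Set.mem_iUnion, SetLike.mem_coe]
      exact ⟨ξ, hξ, hx⟩
    intro x hx y hy
    rcases hx with hxT | hxU
    · rcases hy with hyT | hyU
      · -- both in T ⊆ H : bracket is zero
        have hxH : x ∈ H.toSubmodule := hTH hxT
        have hyH : y ∈ H.toSubmodule := hTH hyT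
        have : ⁅x, y⁆ = ((⁅(⟨x, hxH⟩ : ↥H), (⟨y, hyH⟩ : ↥H)⁆ : ↥H) : L) := by
          rw [LieSubalgebra.coe_bracket]
        rw [this, habelian]
        simp
      · -- x ∈ T ⊆ H, y ∈ Lrt ξ
        simp only [Set.mem_iUnion, SetLike.mem_coe] at hyU
        obtain ⟨ξ, hξ0, hyξ⟩ := hyU
        have hxH : x ∈ H.toSubmodule := hTH hxT
        rw [(hLrt ξ y).1 hyξ ⟨x, hxH⟩]
        exact Submodule.smul_mem _ _ (hsub2 ξ hξ0 y hyξ)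
    · simp only [Set.mem_iUnion, SetLike.mem_coe] at hxU
      obtain ⟨ξ, hξ0, hxξ⟩ := hxU
      rcases hy with hyT | hyU
      · -- x ∈ Lrt ξ, y ∈ T ⊆ H
        have hyH : y ∈ H.toSubmodule := hTH hyT
        rw [← lie_skew, (hLrt ξ x).1 hxξ ⟨y, hyH⟩]
        exact Submodule.neg_mem _ (hsub2 ξ hξ0 _ (Submodule.smul_mem _ _ hxξ))
      · simp only [Set.mem_iUnion, SetLike.mem_coe] at hyU
        obtain ⟨η, hη0, hyη⟩ := hyU
        by_cases hcase : η = -ξ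
        · subst hcase
          by_cases hξR : ξ ∈ R
          · have hbr := brkt_eq_t hLrt hBinv hdecomp hA1 hA2 hA3 hξR hxξ hyη
            rw [hbr]
            apply Submodule.smul_mem
            apply Submodule.subset_span
            left
            apply Submodule.subset_span
            exact ⟨ξ, ⟨hξR, by rw [hform ξ hξR ξ hξR]; exact haniso_all ξ hξR hξ0⟩, rfl⟩
          · have : Lrt ξ = ⊥ := by
              rw [hR] at hξR
              simpa using hξR
            rw [this] at hxξ
            have : x = 0 := by simpa using hxξ
            rw [this, zero_lie]
            exact Submodule.zero_mem _
        · have hmem := brkt_mem hLrt hxξ hyη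
          have hne : ξ + η ≠ 0 := by
            intro hcon
            apply hcase
            have : η = -ξ := by linear_combination (norm := abel) hcon
            exact this
          exact hsub2 _ hne _ hmem
  -- full bracket closure by double span induction
  have hclosed : ∀ x ∈ Submodule.span F s, ∀ y ∈ Submodule.span F s,
      ⁅x, y⁆ ∈ Submodule.span F s := by
    intro x hx
    induction hx using Submodule.span_induction with
    | mem x hxs =>
      intro y hy
      induction hy using Submodule.span_induction with
      | mem y hys => exact hbase x hxs y hys
      | zero => rw [lie_zero]; exact Submodule.zero_mem _
      | add y z _ _ hy hz => rw [lie_add]; exact Submodule.add_mem _ hy hz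
      | smul a y _ hy => rw [lie_smul]; exact Submodule.smul_mem _ a hy
    | zero => intro y hy; rw [zero_lie]; exact Submodule.zero_mem _
    | add x z _ _ hx hz => intro y hy; rw [add_lie]; exact Submodule.add_mem _ (hx y hy) (hz y hy)
    | smul a x _ hx => intro y hy; rw [smul_lie]; exact Submodule.smul_mem _ a (hx y hy)
  -- Lc is contained in span s
  set K : LieSubalgebra F L :=
    { toSubmodule := Submodule.span F s
      lie_mem' := fun {x y} hx hy => hclosed x hx y hy } with hK
  have hLcK : Lc ≤ K := by
    rw [hLcdef, LieSubalgebra.lieSpan_le]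
    intro x hx
    simp only [Set.mem_iUnion, SetLike.mem_coe] at hx
    obtain ⟨α, hα, hxα⟩ := hx
    have hα0 : α ≠ 0 := by
      intro h0
      apply hα.2
      rw [h0] at hα ⊢
      rw [hform 0 hα.1 0 hα.1, t_zero hLrt hBinv hdecomp hA1 hA2 hA3 hα.1]
      simp
    show x ∈ Submodule.span F s
    apply Submodule.subset_span
    right
    simp only [Set.mem_iUnion, SetLike.mem_coe]
    exact ⟨α, hα0, hxα⟩
  -- conclusion
  intro v hv hvH
  have hvs : v ∈ Submodule.span F s := hLcK hv
  rw [hspan] at hvs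
  obtain ⟨a, ha, b, hb, hab⟩ := Submodule.mem_sup.1 hvs
  have hbH : b ∈ Lrt 0 := by
    rw [hA1]
    have hbeq : b = v - a := eq_sub_of_add_eq' hab
    rw [hbeq]
    exact Submodule.sub_mem _ hvH (hTH ha)
  have hb0 : b = 0 := by
    have hd := hindep 0
    have : b ∈ Lrt 0 ⊓ (⨆ ξ, ⨆ (_ : ξ ≠ (0 : Module.Dual F ↥H)), Lrt ξ) := ⟨hbH, hb⟩
    have := hd.le_bot this
    simpa using this
  rw [← hab, hb0, add_zero]
  exact ha


end LEALA84


theorem lemma_8_4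
    {F L : Type*} [Field F] [CharZero F] [LieRing L] [LieAlgebra F L]
    (H : LieSubalgebra F L)
    (habelian : ∀ x y : ↥H, ⁅x, y⁆ = 0)
    -- root spaces with respect to H
    (Lrt : Module.Dual F ↥H → Submodule F L)
    (hLrt : ∀ ξ (x : L), x ∈ Lrt ξ ↔ ∀ h : ↥H, ⁅(h : L), x⁆ = ξ h • x)
    -- root space decomposition L = ⊕_{ξ} L_ξ
    (hdecomp : ⨆ ξ, Lrt ξ = ⊤) (hindep : iSupIndep Lrt)
    -- the set of roots
    (R : Set (Module.Dual F ↥H))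
    (hR : R = {ξ | Lrt ξ ≠ ⊥})
    -- a symmetric invariant bilinear form on L
    (B : LinearMap.BilinForm F L)
    (hBsym : ∀ x y : L, B x y = B y x)
    (hBinv : ∀ x y z : L, B ⁅x, y⁆ z = B x ⁅y, z⁆)
    -- (A1) H is self-centralizing
    (hA1 : Lrt 0 = H.toSubmodule)
    -- (A2) B is nondegenerate
    (hA2 : B.Nondegenerate)
    -- (A3) every root is represented by some t_ξ ∈ H
    (t : Module.Dual F ↥H → ↥H)
    (hA3 : ∀ ξ ∈ R, ∀ h : ↥H, ξ h = B (t ξ) h)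
    -- the induced form, extended bilinearly to the span of R
    (form : LinearMap.BilinForm F (Module.Dual F ↥H))
    (hform : ∀ ξ ∈ R, ∀ η ∈ R, form ξ η = B (t ξ : L) (t η : L))
    -- (A4) ad x is locally nilpotent for x in an anisotropic root space
    (hA4 : ∀ α ∈ R, form α α ≠ 0 → ∀ x ∈ Lrt α, ∀ y : L,
      ∃ n : ℕ, ((LieAlgebra.ad F L x) ^ n) y = 0)
    -- (A5) R^× is irreducible
    (hA5 : ∀ R1 R2 : Set (Module.Dual F ↥H), {ξ | ξ ∈ R ∧ form ξ ξ ≠ 0} = R1 ∪ R2 →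
      (∀ ξ ∈ R1, ∀ η ∈ R2, form ξ η = 0) → R1 = ∅ ∨ R2 = ∅)
    -- the form is scaled: (β,β) is rational for all β ∈ R^×, positive for some α ∈ R^×
    (hscale : ∀ β ∈ R, form β β ≠ 0 → ∃ q : ℚ, form β β = (q : F))
    (hpos : ∃ α ∈ R, ∃ q : ℚ, 0 < q ∧ form α α = (q : F))
    -- nullity 0: the radical of the induced form on the ℚ-span V of R is zero
    (hnull0 : ∀ v : Module.Dual F ↥H,
      (∃ (n : ℕ) (q : Fin n → ℚ) (ζ : Fin n → Module.Dual F ↥H),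
        (∀ i, ζ i ∈ R) ∧ v = ∑ i, (q i : F) • ζ i) →
      (∀ w ∈ R, form v w = 0) → v = 0)
    -- the core: the subalgebra generated by the anisotropic root spaces
    (Lc : LieSubalgebra F L)
    (hLcdef : Lc = LieSubalgebra.lieSpan F L
      (⋃ α ∈ {α | α ∈ R ∧ form α α ≠ 0}, (Lrt α : Set L)))
    :
    ∀ Zs : Submodule F L, (∀ z : L, z ∈ Zs ↔ ∀ y : L, ⁅z, y⁆ = 0) →
      -- Z ⊆ H, Z ∩ L_c = 0
      (Zs ≤ H.toSubmodule) ∧ (Zs ⊓ Lc.toSubmodule = ⊥) ∧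
      ∃ D : Submodule F L, D ≤ H.toSubmodule ∧
        -- D is an abelian subalgebra acting on L_c
        (∀ d1 ∈ D, ∀ d2 ∈ D, ⁅d1, d2⁆ = 0) ∧
        (∀ d ∈ D, ∀ x ∈ Lc, ⁅d, x⁆ ∈ Lc) ∧
        -- L = L_c ⊕ D ⊕ Z as vector spaces
        (Lc.toSubmodule ⊓ D = ⊥) ∧
        ((Lc.toSubmodule ⊔ D) ⊓ Zs = ⊥) ∧
        (Lc.toSubmodule ⊔ D ⊔ Zs = ⊤) ∧
        -- H = (H ∩ L_c) ⊕ D ⊕ Z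
        (H.toSubmodule = (H.toSubmodule ⊓ Lc.toSubmodule) ⊔ D ⊔ Zs) ∧
        -- L_c ⊕ D has trivial centre
        (∀ x ∈ Lc.toSubmodule ⊔ D, (∀ y ∈ Lc.toSubmodule ⊔ D, ⁅x, y⁆ = 0) → x = 0) := by
  classical
  intro Zs hZs
  have hZH : Zs ≤ H.toSubmodule := by
    intro z hz
    have hz0 : z ∈ Lrt 0 := by
      rw [hLrt]
      intro h
      have h1 : ⁅z, (h : L)⁆ = 0 := (hZs z).1 hz (h : L)
      rw [← lie_skew, h1]
      simp
    rw [← hA1]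
    exact hz0
  have hZker : ∀ z, ∀ hz : z ∈ Zs, ∀ ξ ∈ R, ξ ⟨z, hZH hz⟩ = 0 := by
    intro z hz ξ hξ
    have hbot : Lrt ξ ≠ ⊥ := by rw [hR] at hξ; exact hξ
    obtain ⟨x, hx, hxne⟩ := (Submodule.ne_bot_iff _).1 hbot
    have h1 := (hLrt ξ x).1 hx ⟨z, hZH hz⟩
    have h0 : ⁅z, x⁆ = 0 := (hZs z).1 hz x
    have h2 : ξ ⟨z, hZH hz⟩ • x = 0 := by
      rw [← h1]
      exact h0
    rcases smul_eq_zero.1 h2 with h' | h'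
    · exact h'
    · exact absurd h' hxne
  have haniso_all : ∀ ξ ∈ R, ξ ≠ 0 → B (t ξ : L) (t ξ : L) ≠ 0 := by
    intro ξ hξ hne hiso
    exact hne (LEALA84.iso_zero hLrt hBsym hBinv hdecomp hR hA1 hA2 hA3 hform hA4 hnull0 hξ hiso)
  have hscaleB : ∀ β ∈ R, B (t β : L) (t β : L) ≠ 0 → ∃ q : ℚ, B (t β : L) (t β : L) = (q : F) := by
    intro β hβ hne
    have h1 := hform β hβ β hβ
    obtain ⟨q, hq⟩ := hscale β hβ (by rw [h1]; exact hne)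
    exact ⟨q, by rw [← h1]; exact hq⟩
  have hZLc : Zs ⊓ Lc.toSubmodule = ⊥ := by
    rw [eq_bot_iff]
    rintro z ⟨hz1, hz2⟩
    rw [Submodule.mem_bot]
    have hzT := LEALA84.core_inf_H hLrt habelian hBinv hdecomp hindep hR hA1 hA2 hA3 hform
      hLcdef haniso_all z ((LieSubalgebra.mem_toSubmodule Lc).1 hz2) (hZH hz1)
    obtain ⟨cf, hsupp, hsum⟩ := Submodule.mem_span_set.1 hzT
    set n : ℕ := cf.support.card with hn
    set e : {x // x ∈ cf.support} ≃ Fin n := cf.support.equivFin with he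
    set g : Fin n → L := fun i => ((e.symm i : L)) with hg
    have hgmem : ∀ i : Fin n, ∃ α, (α ∈ R ∧ form α α ≠ 0) ∧ g i = (t α : L) := by
      intro i
      exact hsupp (e.symm i).2
    choose αf hαf using hgmem
    set coefs : Fin n → F := fun i => cf (g i) with hcoefs
    have hzsum : z = ∑ i, coefs i • (t (αf i) : L) := by
      rw [← hsum, Finsupp.sum]
      rw [← Finset.sum_coe_sort cf.support (fun x => cf x • x)]
      rw [← Equiv.sum_comp e.symm (fun x : {x // x ∈ cf.support} => cf (x : L) • (x : L))]
      exact Finset.sum_congr rfl fun i _ => by rw [← (hαf i).2]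
    have hsys : ∀ η ∈ R, B (t η : L) (∑ i, coefs i • (t (αf i) : L)) = 0 := by
      intro η hη
      rw [← hzsum]
      have h1 := hA3 η hη ⟨z, hZH hz1⟩
      rw [hZker z hz1 η hη] at h1
      exact h1.symm
    have h0 := LEALA84.central_core_zero hLrt hBsym hBinv hdecomp hR hA1 hA2 hA3 hform hA4 hnull0
      hscaleB n coefs αf (fun i => (hαf i).1.1)
      (fun i => by
        have hthis := (hαf i).1.2
        rw [hform _ (hαf i).1.1 _ (hαf i).1.1] at hthis
        exact hthis)
      hsys
    rw [hzsum, h0]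
  refine ⟨hZH, hZLc, ?_⟩
  set V : Submodule F L := H.toSubmodule with hV
  set A : Submodule F L := (V ⊓ Lc.toSubmodule) ⊔ Zs with hA
  have hAH : A ≤ V := sup_le inf_le_left hZH
  set A' : Submodule F ↥V := A.comap V.subtype with hA'
  obtain ⟨W, hW⟩ := Submodule.exists_isCompl A'
  set D : Submodule F L := W.map V.subtype with hD
  have hDH : D ≤ V := by
    rintro x hx
    obtain ⟨w, hw, rfl⟩ := hx
    simpa using w.2
  have hmapA : A'.map V.subtype = A := by
    rw [hA', Submodule.map_comap_eq, Submodule.range_subtype]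
    exact inf_eq_right.2 hAH
  have hADsup : A ⊔ D = V := by
    rw [← hmapA, hD, ← Submodule.map_sup, hW.sup_eq_top, Submodule.map_top,
      Submodule.range_subtype]
  have hADinf : A ⊓ D = ⊥ := by
    rw [← hmapA, hD, ← Submodule.map_inf V.subtype (Submodule.injective_subtype V),
      hW.inf_eq_bot, Submodule.map_bot]
  have hLcsub : ∀ ξ ∈ R, ξ ≠ 0 → Lrt ξ ≤ Lc.toSubmodule := by
    intro ξ hξ hne x hx
    rw [hLcdef]
    apply LieSubalgebra.subset_lieSpan
    simp only [Set.mem_iUnion, SetLike.mem_coe]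
    refine ⟨ξ, ⟨hξ, ?_⟩, hx⟩
    rw [hform ξ hξ ξ hξ]
    exact haniso_all ξ hξ hne
  have htotal : Lc.toSubmodule ⊔ D ⊔ Zs = ⊤ := by
    rw [eq_top_iff, ← hdecomp]
    apply iSup_le
    intro ξ
    by_cases hbot : Lrt ξ = ⊥
    · rw [hbot]; exact bot_le
    · have hξR : ξ ∈ R := by rw [hR]; exact hbot
      by_cases hξ0 : ξ = 0
      · subst hξ0
        rw [hA1]
        rw [← hADsup, hA]
        apply sup_le (sup_le _ _) _
        · exact le_trans inf_le_right (le_trans le_sup_left le_sup_left)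
        · exact le_sup_right
        · exact le_trans le_sup_right le_sup_left
      · exact le_trans (hLcsub ξ hξR hξ0) (le_trans le_sup_left le_sup_left)
  have hLcDZ : (Lc.toSubmodule ⊔ D) ⊓ Zs = ⊥ := by
    rw [eq_bot_iff]
    rintro z ⟨hzu, hzZ⟩
    rw [Submodule.mem_bot]
    obtain ⟨c, hc, d, hd, hcd⟩ := Submodule.mem_sup.1 hzu
    have hdV : d ∈ V := hDH hd
    have hzV : z ∈ V := hZH hzZ
    have hcV : c ∈ V := by
      have hce : c = z - d := eq_sub_of_add_eq hcd
      rw [hce]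
      exact Submodule.sub_mem _ hzV hdV
    have hcA : c ∈ A := Submodule.mem_sup_left ⟨hcV, hc⟩
    have hzA : z ∈ A := Submodule.mem_sup_right hzZ
    have hdA : d ∈ A := by
      have hde : d = z - c := eq_sub_of_add_eq' hcd
      rw [hde]
      exact Submodule.sub_mem _ hzA hcA
    have hd0 : d = 0 := by
      have : d ∈ A ⊓ D := ⟨hdA, hd⟩
      rw [hADinf] at this
      simpa using this
    have hzc : z = c := by rw [← hcd, hd0, add_zero]
    have : z ∈ Zs ⊓ Lc.toSubmodule := ⟨hzZ, by rw [hzc]; exact hc⟩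
    rw [hZLc] at this
    simpa using this
  refine ⟨D, hDH, ?_, ?_, ?_, hLcDZ, htotal, ?_, ?_⟩
  · -- abelian
    intro d1 hd1 d2 hd2
    have h1 : d1 ∈ H := (LieSubalgebra.mem_toSubmodule H).1 (hDH hd1)
    have h2 : d2 ∈ H := (LieSubalgebra.mem_toSubmodule H).1 (hDH hd2)
    have hco : ⁅d1, d2⁆ = ((⁅(⟨d1, h1⟩ : ↥H), (⟨d2, h2⟩ : ↥H)⁆ : ↥H) : L) := by
      rw [LieSubalgebra.coe_bracket]
    rw [hco, habelian]
    simp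
  · -- D acts on Lc
    intro d hd x hx
    exact LEALA84.core_H_stable hLrt hLcdef d (hDH hd) x hx
  · -- Lc ⊓ D = ⊥
    rw [eq_bot_iff]
    rintro x ⟨hx1, hx2⟩
    have hxA : x ∈ A := Submodule.mem_sup_left ⟨hDH hx2, hx1⟩
    have : x ∈ A ⊓ D := ⟨hxA, hx2⟩
    rw [hADinf] at this
    exact this
  · -- H = (H ⊓ Lc) ⊔ D ⊔ Zs
    rw [sup_right_comm, ← hA, hADsup]
  · -- trivial centre of Lc ⊔ D
    intro x hx hcomm
    have hxZ : x ∈ Zs := by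
      rw [hZs x]
      intro y
      have hy : y ∈ Lc.toSubmodule ⊔ D ⊔ Zs := by rw [htotal]; trivial
      obtain ⟨u, hu, z', hz', hsum⟩ := Submodule.mem_sup.1 hy
      have hxz' : ⁅x, z'⁆ = 0 := by
        rw [← lie_skew, (hZs z').1 hz' x]
        simp
      rw [← hsum, lie_add, hcomm u hu, hxz', add_zero]
    have : x ∈ (Lc.toSubmodule ⊔ D) ⊓ Zs := ⟨hx, hxZ⟩
    rw [hLcDZ] at this
    simpa using this
end

section
/- Let L = 𝔤 ⊕ D as in the context, and let σ be a symmetric invariant bilinear form on L whose restriction to 𝔤 × 𝔤 is nonzero. Then the radical rad σ = {x ∈ L : σ(x,y) = 0 for all y ∈ L} is contained in the centre Z of L; in particular, if Z = 0 then σ is nondegenerate. Moreover, Z = 0 if and only if D ∩ Z = 0 and {ad_𝔤 x : x ∈ 𝔤} ∩ {ad_𝔤 d : d ∈ D} = 0, i.e. no nonzero element of D acts on 𝔤 as an inner derivation. -/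
theorem lemma_8_5
    {F L : Type*} [Field F] [CharZero F] [LieRing L] [LieAlgebra F L]
    -- 𝔤 is an ideal of L = 𝔤 ⊕ D
    (g : LieSubalgebra F L)
    (hgideal : ∀ x : L, ∀ y ∈ g, ⁅x, y⁆ ∈ g)
    (hsimple : LieAlgebra.IsSimple F ↥g)
    -- 𝔥 is a split Cartan subalgebra of 𝔤
    (hsub : LieSubalgebra F L) (hhg : hsub ≤ g)
    (hhab : ∀ x y : ↥hsub, ⁅x, y⁆ = 0)
    (Δ : Set (Module.Dual F ↥hsub)) (h0 : (0 : Module.Dual F ↥hsub) ∉ Δ)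
    (gmu : Module.Dual F ↥hsub → Submodule F L)
    (hgmu : ∀ μ (x : L), x ∈ gmu μ ↔ x ∈ g ∧ ∀ h : ↥hsub, ⁅(h : L), x⁆ = μ h • x)
    (hdec : g.toSubmodule = hsub.toSubmodule ⊔ ⨆ μ ∈ Δ, gmu μ)
    (hzero : gmu 0 = hsub.toSubmodule)
    -- D is an abelian subalgebra with [𝔥, D] = 0 and [d, 𝔤_μ] ⊆ 𝔤_μ
    (D : LieSubalgebra F L)
    (hDab : ∀ x y : ↥D, ⁅x, y⁆ = 0)
    (hcompl1 : g.toSubmodule ⊓ D.toSubmodule = ⊥)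
    (hcompl2 : g.toSubmodule ⊔ D.toSubmodule = ⊤)
    (hhD : ∀ h ∈ hsub, ∀ d ∈ D, ⁅h, d⁆ = 0)
    (hDpres : ∀ d ∈ D, ∀ μ ∈ Δ, ∀ x ∈ gmu μ, ⁅d, x⁆ ∈ gmu μ)
    -- ρ is a nondegenerate symmetric invariant form on 𝔤, unique up to scalars
    (ρ : LinearMap.BilinForm F ↥g)
    (hρsym : ∀ x y : ↥g, ρ x y = ρ y x)
    (hρinv : ∀ x y z : ↥g, ρ ⁅x, y⁆ z = ρ x ⁅y, z⁆)
    (hρnd : ρ.Nondegenerate)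
    (huniq : ∀ σ' : LinearMap.BilinForm F ↥g, (∀ x y : ↥g, σ' x y = σ' y x) →
      (∀ x y z : ↥g, σ' ⁅x, y⁆ z = σ' x ⁅y, z⁆) → ∃ c : F, ∀ x y : ↥g, σ' x y = c * ρ x y)
    -- σ is a symmetric invariant form on L, nonzero on 𝔤 × 𝔤
    (σ : LinearMap.BilinForm F L)
    (hσsym : ∀ x y : L, σ x y = σ y x)
    (hσinv : ∀ x y z : L, σ ⁅x, y⁆ z = σ x ⁅y, z⁆)
    (hσg : ∃ x ∈ g, ∃ y ∈ g, σ x y ≠ 0) :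
    -- rad σ ⊆ Z
    (∀ x : L, (∀ y : L, σ x y = 0) → ∀ y : L, ⁅x, y⁆ = 0) ∧
    -- if Z = 0 then σ is nondegenerate
    ((∀ z : L, (∀ y : L, ⁅z, y⁆ = 0) → z = 0) → σ.Nondegenerate) ∧
    -- Z = 0 ↔ D ∩ Z = 0 and no nonzero element of D acts on 𝔤 as an inner derivation
    ((∀ z : L, (∀ y : L, ⁅z, y⁆ = 0) → z = 0) ↔
      ((∀ d ∈ D, (∀ y : L, ⁅d, y⁆ = 0) → d = 0) ∧
       (∀ d ∈ D, ∀ x ∈ g, (∀ y ∈ g, ⁅d, y⁆ = ⁅x, y⁆) → ∀ y ∈ g, ⁅d, y⁆ = 0))) := by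
  classical
  -- decomposition L = g ⊕ D
  have decomp : ∀ x : L, ∃ a ∈ g, ∃ d ∈ D, x = a + d := by
    intro x
    have hx : x ∈ g.toSubmodule ⊔ D.toSubmodule := by rw [hcompl2]; trivial
    obtain ⟨a, ha, d, hd, h⟩ := Submodule.mem_sup.mp hx
    exact ⟨a, ha, d, hd, h.symm⟩
  -- D is abelian (in L)
  have hDab' : ∀ d ∈ D, ∀ e ∈ D, ⁅d, e⁆ = (0 : L) := by
    intro d hd e he
    have := hDab ⟨d, hd⟩ ⟨e, he⟩
    have := congrArg (Subtype.val) this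
    simpa using this
  -- the centre of g is trivial
  have hcenter : ∀ a : L, a ∈ g → (∀ y ∈ g, ⁅a, y⁆ = 0) → a = 0 := by
    intro a ha hcen
    have hmem : (⟨a, ha⟩ : ↥g) ∈ LieAlgebra.center F ↥g := by
      rw [LieModule.mem_maxTrivSubmodule]
      intro x
      have : ⁅(x : L), a⁆ = 0 := by
        rw [← lie_skew, hcen x x.2, neg_zero]
      exact Subtype.ext this
    rw [LieAlgebra.center_eq_bot, LieSubmodule.mem_bot] at hmem
    exact congrArg Subtype.val hmem
  -- σ restricted to g
  set σ' : LinearMap.BilinForm F ↥g :=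
    σ.compl₁₂ g.toSubmodule.subtype g.toSubmodule.subtype with hσ'def
  have hσ'app : ∀ x y : ↥g, σ' x y = σ (x : L) (y : L) := fun x y => rfl
  obtain ⟨c, hc⟩ := huniq σ' (fun x y => hσsym _ _)
    (by intro x y z
        have : ((⁅x, y⁆ : ↥g) : L) = ⁅(x : L), (y : L)⁆ := rfl
        rw [hσ'app, hσ'app, this]
        exact hσinv _ _ _)
  have hcne : c ≠ 0 := by
    obtain ⟨x0, hx0, y0, hy0, hxy0⟩ := hσg
    intro h
    apply hxy0
    have := hc ⟨x0, hx0⟩ ⟨y0, hy0⟩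
    rw [hσ'app] at this
    simpa [h] using this
  have hgnd : ∀ a : L, a ∈ g → (∀ y ∈ g, σ a y = 0) → a = 0 := by
    intro a ha hz
    have : (⟨a, ha⟩ : ↥g) = 0 := by
      apply hρnd.1
      intro y
      have h1 : σ' ⟨a, ha⟩ y = 0 := hz y y.2
      have h2 := hc ⟨a, ha⟩ y
      rw [h1] at h2
      exact (mul_eq_zero.mp h2.symm).resolve_left hcne
    exact congrArg Subtype.val this
  -- part 1
  have part1 : ∀ x : L, (∀ y : L, σ x y = 0) → ∀ y : L, ⁅x, y⁆ = 0 := by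
    intro x hx y
    obtain ⟨a, ha, d, hd, hxd⟩ := decomp x
    obtain ⟨b, hb, e, he, hye⟩ := decomp y
    have hmem : ⁅x, y⁆ ∈ g := by
      rw [hxd, hye, add_lie, lie_add, lie_add]
      have h1 : ⁅a, b⁆ ∈ g := hgideal a b hb
      have h2 : ⁅a, e⁆ ∈ g := by
        rw [← neg_neg (⁅a, e⁆ : L), lie_skew]
        exact g.toSubmodule.neg_mem (hgideal e a ha)
      have h3 : ⁅d, b⁆ ∈ g := hgideal d b hb
      have h4 : ⁅d, e⁆ = (0 : L) := hDab' d hd e he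
      rw [h4]
      exact g.toSubmodule.add_mem (g.toSubmodule.add_mem h1 h2)
        (g.toSubmodule.add_mem h3 (by simp))
    apply hgnd _ hmem
    intro z _
    rw [hσinv]
    exact hx _
  refine ⟨part1, ?_, ?_⟩
  · intro hZ; refine ⟨fun x hx => ?_, fun x hx => hZ x (part1 x fun z => by rw [hσsym]; exact hx z)⟩
    exact hZ x (part1 x hx)
  constructor
  · intro hZ
    refine ⟨fun d _ h => hZ d h, ?_⟩
    intro d hd x hx hadj
    -- step A: ⁅x, d'⁆ = 0 for all d' ∈ D
    have stepA : ∀ d' ∈ D, ⁅x, d'⁆ = (0 : L) := by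
      intro d' hd'
      have hmem : ⁅x, d'⁆ ∈ g := by
        rw [← neg_neg (⁅x, d'⁆ : L), lie_skew]
        exact g.toSubmodule.neg_mem (hgideal d' x hx)
      apply hcenter _ hmem
      intro y hy
      have hdy : ⁅d', y⁆ ∈ g := hgideal d' y hy
      have hxy : ⁅x, y⁆ ∈ g := hgideal x y hy
      calc ⁅⁅x, d'⁆, y⁆ = ⁅x, ⁅d', y⁆⁆ - ⁅d', ⁅x, y⁆⁆ := by rw [lie_lie]
        _ = ⁅d, ⁅d', y⁆⁆ - ⁅d', ⁅d, y⁆⁆ := by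
              rw [hadj _ hdy, hadj _ hy]
        _ = ⁅⁅d, d'⁆, y⁆ := by rw [lie_lie]
        _ = 0 := by rw [hDab' d hd d' hd', zero_lie]
    -- step B: d - x is central
    have hdx : d - x = 0 := by
      apply hZ
      intro y
      obtain ⟨b, hb, e, he, hye⟩ := decomp y
      rw [hye, lie_add, sub_lie, sub_lie]
      rw [hadj b hb, hDab' d hd e he, stepA e he]
      simp
    have hdg : d ∈ g := by
      have : d = x := sub_eq_zero.mp hdx
      rw [this]; exact hx
    have : d ∈ g.toSubmodule ⊓ D.toSubmodule := ⟨hdg, hd⟩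
    rw [hcompl1, Submodule.mem_bot] at this
    intro y _
    rw [this, zero_lie]
  · rintro ⟨h1, h2⟩ z hz
    obtain ⟨a, ha, d, hd, hzd⟩ := decomp z
    have hdinner : ∀ y ∈ g, ⁅d, y⁆ = ⁅-a, y⁆ := by
      intro y hy
      have := hz y
      rw [hzd, add_lie] at this
      rw [neg_lie]
      exact eq_neg_of_add_eq_zero_right this
    have hd0 : ∀ y ∈ g, ⁅d, y⁆ = (0 : L) :=
      h2 d hd (-a) (g.toSubmodule.neg_mem ha) hdinner
    have ha0 : a = 0 := by
      apply hcenter a ha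
      intro y hy
      have := hz y
      rw [hzd, add_lie, hd0 y hy, add_zero] at this
      exact this
    rw [hzd, ha0, zero_add] at hz ⊢
    exact h1 d hd hz
end

section
/- A tame LEALA is indecomposable: if (L,H,B) is a LEALA with C_L(L_c) ⊆ L_c, and L = L₁ ⊕ L₂ where L₁, L₂ are ideals of L with [L₁,L₂] = 0, B(L₁,L₂) = 0, H = (H ∩ L₁) ⊕ (H ∩ L₂), and each (L_i, H ∩ L_i, B|_{L_i}) satisfies the axioms of the category (so that (L,H,B) is the direct sum of the two triples), then L₁ = 0 or L₂ = 0. -/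
theorem lemma_9_4
    {F L : Type*} [Field F] [CharZero F] [LieRing L] [LieAlgebra F L]
    (H : LieSubalgebra F L)
    (habelian : ∀ x y : ↥H, ⁅x, y⁆ = 0)
    -- root spaces with respect to H
    (Lrt : Module.Dual F ↥H → Submodule F L)
    (hLrt : ∀ ξ (x : L), x ∈ Lrt ξ ↔ ∀ h : ↥H, ⁅(h : L), x⁆ = ξ h • x)
    -- root space decomposition L = ⊕_{ξ} L_ξ
    (hdecomp : ⨆ ξ, Lrt ξ = ⊤) (hindep : iSupIndep Lrt)
    -- the set of roots
    (R : Set (Module.Dual F ↥H))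
    (hR : R = {ξ | Lrt ξ ≠ ⊥})
    -- a symmetric invariant bilinear form on L
    (B : LinearMap.BilinForm F L)
    (hBsym : ∀ x y : L, B x y = B y x)
    (hBinv : ∀ x y z : L, B ⁅x, y⁆ z = B x ⁅y, z⁆)
    -- (A1) H is self-centralizing
    (hA1 : Lrt 0 = H.toSubmodule)
    -- (A2) B is nondegenerate
    (hA2 : B.Nondegenerate)
    -- (A3) every root is represented by some t_ξ ∈ H
    (t : Module.Dual F ↥H → ↥H)
    (hA3 : ∀ ξ ∈ R, ∀ h : ↥H, ξ h = B (t ξ) h)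
    -- the induced form, extended bilinearly to the span of R
    (form : LinearMap.BilinForm F (Module.Dual F ↥H))
    (hform : ∀ ξ ∈ R, ∀ η ∈ R, form ξ η = B (t ξ : L) (t η : L))
    -- (A4) ad x is locally nilpotent for x in an anisotropic root space
    (hA4 : ∀ α ∈ R, form α α ≠ 0 → ∀ x ∈ Lrt α, ∀ y : L,
      ∃ n : ℕ, ((LieAlgebra.ad F L x) ^ n) y = 0)
    -- (A5) R^× is irreducible
    (hA5 : ∀ R1 R2 : Set (Module.Dual F ↥H), {ξ | ξ ∈ R ∧ form ξ ξ ≠ 0} = R1 ∪ R2 →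
      (∀ ξ ∈ R1, ∀ η ∈ R2, form ξ η = 0) → R1 = ∅ ∨ R2 = ∅)
    -- the core and tameness: C_L(L_c) ⊆ L_c
    (Lc : LieSubalgebra F L)
    (hLcdef : Lc = LieSubalgebra.lieSpan F L
      (⋃ α ∈ {α | α ∈ R ∧ form α α ≠ 0}, (Lrt α : Set L)))
    (htame : ∀ x : L, (∀ y ∈ Lc, ⁅x, y⁆ = 0) → x ∈ Lc)
    -- a decomposition of (L, H, B) as a direct sum of two triples
    (L1 L2 : LieIdeal F L)
    (hbr : ∀ x ∈ L1, ∀ y ∈ L2, ⁅x, y⁆ = 0)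
    (horth : ∀ x ∈ L1, ∀ y ∈ L2, B x y = 0)
    (hinf : L1.toSubmodule ⊓ L2.toSubmodule = ⊥)
    (hsup : L1.toSubmodule ⊔ L2.toSubmodule = ⊤)
    (hHsplit : H.toSubmodule =
      (H.toSubmodule ⊓ L1.toSubmodule) ⊔ (H.toSubmodule ⊓ L2.toSubmodule))
    -- each (L_i, H ∩ L_i, B|_{L_i}) has a root space decomposition
    (hroot1 : L1.toSubmodule = ⨆ ξ ∈ R, (Lrt ξ ⊓ L1.toSubmodule))
    (hroot2 : L2.toSubmodule = ⨆ ξ ∈ R, (Lrt ξ ⊓ L2.toSubmodule))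
    :
    L1 = ⊥ ∨ L2 = ⊥ := by
  classical
  -- B-orthogonality: an element of H orthogonal to all of H is zero
  have hO : ∀ z : L, z ∈ H.toSubmodule → (∀ h : ↥H, B z (h : L) = 0) → z = 0 := by
    intro z hzH hz
    apply hA2.1 z
    have hker : (⨆ ξ, Lrt ξ) ≤ LinearMap.ker (B z) := by
      apply iSup_le
      intro ξ
      rcases eq_or_ne ξ 0 with h0 | hne
      · subst h0
        rw [hA1]
        intro w hw
        exact LinearMap.mem_ker.mpr (hz ⟨w, hw⟩)
      · obtain ⟨h₀, hh₀⟩ := DFunLike.ne_iff.mp hne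
        have hh₀' : ξ h₀ ≠ 0 := by simpa using hh₀
        intro w hw
        have h1 : ⁅(h₀ : L), w⁆ = ξ h₀ • w := (hLrt ξ w).mp hw h₀
        have h2 : ⁅(h₀ : L), z⁆ = 0 := by
          have hz0 : z ∈ Lrt 0 := by rw [hA1]; exact hzH
          simpa using (hLrt 0 z).mp hz0 h₀
        have h3 : B z ⁅(h₀ : L), w⁆ = 0 := by
          rw [← hBinv z (h₀ : L) w]
          have h4 : ⁅z, (h₀ : L)⁆ = 0 := by rw [← lie_skew, h2, neg_zero]
          rw [h4]
          simp
        rw [h1, map_smul, smul_eq_mul] at h3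
        exact LinearMap.mem_ker.mpr ((mul_eq_zero.mp h3).resolve_left hh₀')
    intro y
    have hy : y ∈ (⨆ ξ, Lrt ξ) := by rw [hdecomp]; exact Submodule.mem_top
    exact LinearMap.mem_ker.mp (hker hy)
  -- Every root vector splits into root vectors in L1 and L2
  have hsplit : ∀ (ξ : Module.Dual F ↥H) (x : L), x ∈ Lrt ξ →
      ∃ x₁ x₂ : L, x₁ ∈ L1 ∧ x₂ ∈ L2 ∧ x₁ ∈ Lrt ξ ∧ x₂ ∈ Lrt ξ ∧ x = x₁ + x₂ := by
    intro ξ x hx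
    have hxT : x ∈ L1.toSubmodule ⊔ L2.toSubmodule := by rw [hsup]; exact Submodule.mem_top
    obtain ⟨x₁, hx₁, x₂, hx₂, hsum⟩ := Submodule.mem_sup.mp hxT
    have hx₁' : x₁ ∈ L1 := hx₁
    have hx₂' : x₂ ∈ L2 := hx₂
    have key1 : x₁ ∈ Lrt ξ := by
      rw [hLrt]
      intro h
      have d1mem : ⁅(h : L), x₁⁆ - ξ h • x₁ ∈ L1.toSubmodule :=
        Submodule.sub_mem _ (L1.lie_mem hx₁') (Submodule.smul_mem _ _ hx₁)
      have d2mem : ⁅(h : L), x₂⁆ - ξ h • x₂ ∈ L2.toSubmodule :=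
        Submodule.sub_mem _ (L2.lie_mem hx₂') (Submodule.smul_mem _ _ hx₂)
      have hb : ⁅(h : L), x₁⁆ + ⁅(h : L), x₂⁆ = ξ h • x₁ + ξ h • x₂ := by
        rw [← lie_add, ← smul_add, hsum]
        exact (hLrt ξ x).mp hx h
      have hzero : (⁅(h : L), x₁⁆ - ξ h • x₁) + (⁅(h : L), x₂⁆ - ξ h • x₂) = 0 := by
        rw [sub_add_sub_comm, hb, sub_self]
      have d1eq : ⁅(h : L), x₁⁆ - ξ h • x₁ = -(⁅(h : L), x₂⁆ - ξ h • x₂) :=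
        eq_neg_of_add_eq_zero_left hzero
      have d1in2 : ⁅(h : L), x₁⁆ - ξ h • x₁ ∈ L2.toSubmodule := by
        rw [d1eq]
        exact Submodule.neg_mem _ d2mem
      have : ⁅(h : L), x₁⁆ - ξ h • x₁ ∈ L1.toSubmodule ⊓ L2.toSubmodule := ⟨d1mem, d1in2⟩
      rw [hinf, Submodule.mem_bot] at this
      exact sub_eq_zero.mp this
    have key2 : x₂ ∈ Lrt ξ := by
      have : x₂ = x - x₁ := by rw [← hsum]; abel
      rw [this]
      exact Submodule.sub_mem _ hx key1
    exact ⟨x₁, x₂, hx₁', hx₂', key1, key2, hsum.symm⟩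
  -- key lemma: if a root has a nonzero root vector in one summand, then t α lies
  -- in that summand
  have key : ∀ (M N : LieIdeal F L),
      (∀ x ∈ M, ∀ y ∈ N, ⁅x, y⁆ = 0) →
      (∀ x ∈ M, ∀ y ∈ N, B x y = 0) →
      (H.toSubmodule = (H.toSubmodule ⊓ M.toSubmodule) ⊔ (H.toSubmodule ⊓ N.toSubmodule)) →
      ∀ α ∈ R, Lrt α ⊓ M.toSubmodule ≠ ⊥ → (t α : L) ∈ M := by
    intro M N hbr' horth' hHsplit' α hαR hne
    obtain ⟨x, hx, hx0⟩ := (Submodule.ne_bot_iff _).mp hne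
    have hxα : x ∈ Lrt α := hx.1
    have hxM : x ∈ M := hx.2
    -- α vanishes on H ∩ N
    have hvan : ∀ h : ↥H, (h : L) ∈ N → α h = 0 := by
      intro h hhN
      have hb : ⁅(h : L), x⁆ = α h • x := (hLrt α x).mp hxα h
      have hz : ⁅x, (h : L)⁆ = 0 := hbr' x hxM _ hhN
      rw [← lie_skew, hz, neg_zero] at hb
      rcases smul_eq_zero.mp hb.symm with h' | h'
      · exact h'
      · exact absurd h' hx0
    -- split t α as a₁ + a₂
    have htH : (t α : L) ∈ H.toSubmodule := (t α).2
    rw [hHsplit'] at htH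
    obtain ⟨a₁, ha₁, a₂, ha₂, hsum⟩ := Submodule.mem_sup.mp htH
    have ha₁H : a₁ ∈ H.toSubmodule := ha₁.1
    have ha₁M : a₁ ∈ M := ha₁.2
    have ha₂H : a₂ ∈ H.toSubmodule := ha₂.1
    have ha₂N : a₂ ∈ N := ha₂.2
    -- a₂ = 0
    have ha₂0 : a₂ = 0 := by
      apply hO a₂ ha₂H
      intro h
      have hhH : (h : L) ∈ H.toSubmodule := h.2
      rw [hHsplit'] at hhH
      obtain ⟨h₁, hh₁, h₂, hh₂, hhsum⟩ := Submodule.mem_sup.mp hhH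
      have e1 : B a₂ h₁ = 0 := by
        rw [hBsym]
        exact horth' h₁ hh₁.2 a₂ ha₂N
      have e2 : B a₂ h₂ = 0 := by
        have ha₂eq : a₂ = (t α : L) - a₁ := by rw [← hsum]; abel
        have e3 : B a₁ h₂ = 0 := horth' a₁ ha₁M h₂ hh₂.2
        have e4 : B (t α : L) h₂ = 0 := by
          have := hA3 α hαR ⟨h₂, hh₂.1⟩
          rw [← this]
          exact hvan ⟨h₂, hh₂.1⟩ hh₂.2
        rw [ha₂eq, map_sub, LinearMap.sub_apply, e3, e4, sub_zero]
      calc B a₂ (h : L) = B a₂ (h₁ + h₂) := by rw [hhsum]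
        _ = B a₂ h₁ + B a₂ h₂ := by rw [map_add]
        _ = 0 := by rw [e1, e2, add_zero]
    have : (t α : L) = a₁ := by rw [← hsum, ha₂0, add_zero]
    rw [this]
    exact ha₁M
  -- the two root subsets
  have hcover : {ξ : Module.Dual F ↥H | ξ ∈ R ∧ form ξ ξ ≠ 0} =
      {ξ | (ξ ∈ R ∧ form ξ ξ ≠ 0) ∧ Lrt ξ ⊓ L1.toSubmodule ≠ ⊥} ∪
      {ξ | (ξ ∈ R ∧ form ξ ξ ≠ 0) ∧ Lrt ξ ⊓ L2.toSubmodule ≠ ⊥} := by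
    apply Set.Subset.antisymm
    · intro α hα
      have hαR : α ∈ R := hα.1
      have hαne : Lrt α ≠ ⊥ := by rw [hR] at hαR; exact hαR
      obtain ⟨x, hx, hx0⟩ := (Submodule.ne_bot_iff _).mp hαne
      obtain ⟨x₁, x₂, h1, h2, hr1, hr2, hxs⟩ := hsplit α x hx
      by_cases hx₁0 : x₁ = 0
      · right
        refine ⟨hα, (Submodule.ne_bot_iff _).mpr ⟨x₂, ⟨hr2, h2⟩, ?_⟩⟩
        intro h'
        apply hx0
        rw [hxs, hx₁0, h', add_zero]
      · left
        exact ⟨hα, (Submodule.ne_bot_iff _).mpr ⟨x₁, ⟨hr1, h1⟩, hx₁0⟩⟩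
    · rintro α (hα | hα) <;> exact hα.1
  have horthR : ∀ ξ ∈ {ξ | (ξ ∈ R ∧ form ξ ξ ≠ 0) ∧ Lrt ξ ⊓ L1.toSubmodule ≠ ⊥},
      ∀ η ∈ {ξ | (ξ ∈ R ∧ form ξ ξ ≠ 0) ∧ Lrt ξ ⊓ L2.toSubmodule ≠ ⊥}, form ξ η = 0 := by
    intro ξ hξ η hη
    have hbr2 : ∀ x ∈ L2, ∀ y ∈ L1, ⁅x, y⁆ = 0 := by
      intro x hx y hy
      rw [← lie_skew, hbr y hy x hx, neg_zero]
    have horth2 : ∀ x ∈ L2, ∀ y ∈ L1, B x y = 0 := by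
      intro x hx y hy
      rw [hBsym]
      exact horth y hy x hx
    have hHsplit2 : H.toSubmodule =
        (H.toSubmodule ⊓ L2.toSubmodule) ⊔ (H.toSubmodule ⊓ L1.toSubmodule) :=
      hHsplit.trans (sup_comm _ _)
    have ht1 : (t ξ : L) ∈ L1 := key L1 L2 hbr horth hHsplit ξ hξ.1.1 hξ.2
    have ht2 : (t η : L) ∈ L2 := key L2 L1 hbr2 horth2 hHsplit2 η hη.1.1 hη.2
    rw [hform ξ hξ.1.1 η hη.1.1]
    exact horth _ ht1 _ ht2
  rcases hA5 _ _ hcover horthR with hemp | hemp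
  · -- R1 empty: anisotropic root spaces lie in L2, so Lc ≤ L2, so L1 = ⊥
    left
    have hLrtL2 : ∀ α ∈ {α | α ∈ R ∧ form α α ≠ 0}, (Lrt α : Set L) ⊆ L2 := by
      intro α hα x hx
      have hbot : Lrt α ⊓ L1.toSubmodule = ⊥ := by
        by_contra hne
        have : α ∈ ({ξ | (ξ ∈ R ∧ form ξ ξ ≠ 0) ∧ Lrt ξ ⊓ L1.toSubmodule ≠ ⊥} :
            Set (Module.Dual F ↥H)) := ⟨hα, hne⟩
        rw [hemp] at this
        exact this
      obtain ⟨x₁, x₂, h1, h2, hr1, hr2, hxs⟩ := hsplit α x hx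
      have : x₁ ∈ Lrt α ⊓ L1.toSubmodule := ⟨hr1, h1⟩
      rw [hbot, Submodule.mem_bot] at this
      rw [hxs, this, zero_add]
      exact h2
    have hLcL2 : ∀ z ∈ Lc, z ∈ L2 := by
      intro z hz
      rw [hLcdef] at hz
      have : LieSubalgebra.lieSpan F L
          (⋃ α ∈ {α | α ∈ R ∧ form α α ≠ 0}, (Lrt α : Set L)) ≤ (L1 ⊔ L2 : LieIdeal F L) →
          True := fun _ => trivial
      have hle : LieSubalgebra.lieSpan F L
          (⋃ α ∈ {α | α ∈ R ∧ form α α ≠ 0}, (Lrt α : Set L)) ≤ (L2 : LieSubalgebra F L) := by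
        apply LieSubalgebra.lieSpan_le.mpr
        intro y hy
        simp only [Set.mem_iUnion] at hy
        obtain ⟨α, hα, hyα⟩ := hy
        exact hLrtL2 α hα hyα
      exact hle hz
    rw [LieSubmodule.eq_bot_iff]
    intro z hz
    have hzLc : z ∈ Lc := by
      apply htame
      intro y hy
      exact hbr z hz y (hLcL2 y hy)
    have hzL2 : z ∈ L2 := hLcL2 z hzLc
    have : z ∈ L1.toSubmodule ⊓ L2.toSubmodule := ⟨hz, hzL2⟩
    rw [hinf, Submodule.mem_bot] at this
    exact this
  · -- R2 empty: anisotropic root spaces lie in L1, so Lc ≤ L1, so L2 = ⊥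
    right
    have hLrtL1 : ∀ α ∈ {α | α ∈ R ∧ form α α ≠ 0}, (Lrt α : Set L) ⊆ L1 := by
      intro α hα x hx
      have hbot : Lrt α ⊓ L2.toSubmodule = ⊥ := by
        by_contra hne
        have : α ∈ ({ξ | (ξ ∈ R ∧ form ξ ξ ≠ 0) ∧ Lrt ξ ⊓ L2.toSubmodule ≠ ⊥} :
            Set (Module.Dual F ↥H)) := ⟨hα, hne⟩
        rw [hemp] at this
        exact this
      obtain ⟨x₁, x₂, h1, h2, hr1, hr2, hxs⟩ := hsplit α x hx
      have : x₂ ∈ Lrt α ⊓ L2.toSubmodule := ⟨hr2, h2⟩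
      rw [hbot, Submodule.mem_bot] at this
      rw [hxs, this, add_zero]
      exact h1
    have hLcL1 : ∀ z ∈ Lc, z ∈ L1 := by
      intro z hz
      rw [hLcdef] at hz
      have hle : LieSubalgebra.lieSpan F L
          (⋃ α ∈ {α | α ∈ R ∧ form α α ≠ 0}, (Lrt α : Set L)) ≤ (L1 : LieSubalgebra F L) := by
        apply LieSubalgebra.lieSpan_le.mpr
        intro y hy
        simp only [Set.mem_iUnion] at hy
        obtain ⟨α, hα, hyα⟩ := hy
        exact hLrtL1 α hα hyα
      exact hle hz
    rw [LieSubmodule.eq_bot_iff]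
    intro z hz
    have hzLc : z ∈ Lc := by
      apply htame
      intro y hy
      rw [← lie_skew, hbr y (hLcL1 y hy) z hz, neg_zero]
    have hzL1 : z ∈ L1 := hLcL1 z hzLc
    have : z ∈ L1.toSubmodule ⊓ L2.toSubmodule := ⟨hzL1, hz⟩
    rw [hinf, Submodule.mem_bot] at this
    exact this
end
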